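/- arXiv:1306.3735 — 7 statements merged into one kernel-verified Lean document; each statement's English description precedes it below -/
import Mathlib

section
/- Let ν > 0, T > 0, and let F, G : [0,T] × ℝ³ → [0,∞) be measurable. Define H(t,ξ) = ∫₀ᵗ e^{−ν(t−s)|ξ|²} |ξ| (F(s,·) ∗ G(s,·))(ξ) ds, where ∗ denotes convolution in the ξ variable on ℝ³. Then ( ∫₀ᵀ ( ∫_{ℝ³} H(t,ξ) dξ )² dt )^{1/2} ≤ (2ν)^{−1/2} ( ∫₀ᵀ ( ∫_{ℝ³} F(s,ξ) dξ )² ds )^{1/2} ( ∫₀ᵀ ( ∫_{ℝ³} G(s,ξ) dξ )² ds )^{1/2}. -/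
/-!
Write `w(s, ξ) = (F(s) ∗ G(s))(ξ)` and `K_t(s, ξ) = 1_{0 ≤ s ≤ t} e^{-ν(t-s)|ξ|²} |ξ|`, so that
`∫ H(t, ξ) dξ = ∫∫ K_t w`. For every fixed `(s, ξ)`, `∫ K_t(s, ξ)² dt ≤ |ξ|² / (2ν|ξ|²) = 1/(2ν)`:
the factor `|ξ|` exactly compensates the decay rate of the heat semigroup. Expanding the square
of `∫∫ K_t w` and applying Cauchy–Schwarz in `t` to `∫ K_t(p) K_t(q) dt` gives
`∫ (∫∫ K_t w)² dt ≤ (2ν)⁻¹ (∫∫ w)²`. Finally `∫ w(s, ξ) dξ = ‖F(s)‖_{L¹} ‖G(s)‖_{L¹}` by Tonelli and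
translation invariance, and Cauchy–Schwarz in `s` concludes.
-/

open MeasureTheory Real Set
open scoped ENNReal

theorem ENNReal.sq_rpow_one_half (x : ℝ≥0∞) : (x ^ 2) ^ (1 / 2 : ℝ) = x := by
  rw [← ENNReal.rpow_natCast, ← ENNReal.rpow_mul]
  norm_num

section CauchySchwarz

variable {α : Type*} [MeasurableSpace α] {μ : Measure α} {f g : α → ℝ≥0∞}

theorem lintegral_mul_le_lintegral_sq_rpow_mul (hf : AEMeasurable f μ) (hg : AEMeasurable g μ) :
    ∫⁻ a, f a * g a ∂μ ≤
      (∫⁻ a, f a ^ 2 ∂μ) ^ (1 / 2 : ℝ) * (∫⁻ a, g a ^ 2 ∂μ) ^ (1 / 2 : ℝ) := by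
  simpa using ENNReal.lintegral_mul_le_Lp_mul_Lq μ .two_two hf hg

theorem lintegral_mul_le_of_lintegral_sq_le {C : ℝ≥0∞} (hf : AEMeasurable f μ)
    (hg : AEMeasurable g μ) (hfC : ∫⁻ a, f a ^ 2 ∂μ ≤ C) (hgC : ∫⁻ a, g a ^ 2 ∂μ ≤ C) :
    ∫⁻ a, f a * g a ∂μ ≤ C :=
  calc ∫⁻ a, f a * g a ∂μ
      ≤ (∫⁻ a, f a ^ 2 ∂μ) ^ (1 / 2 : ℝ) * (∫⁻ a, g a ^ 2 ∂μ) ^ (1 / 2 : ℝ) :=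
        lintegral_mul_le_lintegral_sq_rpow_mul hf hg
    _ ≤ C ^ (1 / 2 : ℝ) * C ^ (1 / 2 : ℝ) := by gcongr
    _ = C := by rw [← ENNReal.rpow_add_of_nonneg _ _ (by norm_num) (by norm_num)]; norm_num

end CauchySchwarz

theorem lintegral_sq_lintegral_mul_le {α β : Type*} [MeasurableSpace α] [MeasurableSpace β]
    {μ : Measure α} {ρ : Measure β} [SFinite μ] [SFinite ρ] {K : β → α → ℝ≥0∞}
    (hK : Measurable (Function.uncurry K)) {C : ℝ≥0∞} (hKC : ∀ p, ∫⁻ t, K t p ^ 2 ∂ρ ≤ C)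
    {w : α → ℝ≥0∞} (hw : Measurable w) :
    ∫⁻ t, (∫⁻ p, K t p * w p ∂μ) ^ 2 ∂ρ ≤ C * (∫⁻ p, w p ∂μ) ^ 2 := by
  have hKp : ∀ p, Measurable fun t => K t p := fun p => hK.comp measurable_prodMk_right
  have hKt : ∀ t, Measurable (K t) := fun t => hK.comp measurable_prodMk_left
  calc ∫⁻ t, (∫⁻ p, K t p * w p ∂μ) ^ 2 ∂ρ
      = ∫⁻ t, ∫⁻ r, K t r.1 * w r.1 * (K t r.2 * w r.2) ∂μ.prod μ ∂ρ := by
        refine lintegral_congr fun t => ?_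
        rw [sq, ← lintegral_prod_mul (f := fun p => K t p * w p) (g := fun p => K t p * w p)]
          <;> exact ((hKt t).mul hw).aemeasurable
    _ = ∫⁻ r, w r.1 * w r.2 * ∫⁻ t, K t r.1 * K t r.2 ∂ρ ∂μ.prod μ := by
        rw [lintegral_lintegral_swap]
        · refine lintegral_congr fun r => ?_
          rw [← lintegral_const_mul _ (by exact (hKp r.1).mul (hKp r.2))]
          exact lintegral_congr fun t => by ring
        · have h1 : Measurable fun z : β × α × α => K z.1 z.2.1 :=
            hK.comp (measurable_fst.prodMk (measurable_fst.comp measurable_snd))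
          have h2 : Measurable fun z : β × α × α => K z.1 z.2.2 :=
            hK.comp (measurable_fst.prodMk (measurable_snd.comp measurable_snd))
          fun_prop
    _ ≤ ∫⁻ r, w r.1 * w r.2 * C ∂μ.prod μ := by
        gcongr with r
        exact lintegral_mul_le_of_lintegral_sq_le (hKp r.1).aemeasurable (hKp r.2).aemeasurable
          (hKC r.1) (hKC r.2)
    _ = C * (∫⁻ p, w p ∂μ) ^ 2 := by
        rw [lintegral_mul_const'' _ (by fun_prop),
          lintegral_prod_mul hw.aemeasurable hw.aemeasurable, sq, mul_comm]

theorem lintegral_lintegral_mul_sub {G : Type*} [MeasurableSpace G] [AddGroup G]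
    [MeasurableAdd₂ G] [MeasurableNeg G] {μ : Measure G} [SFinite μ] [μ.IsAddRightInvariant]
    {f g : G → ℝ≥0∞} (hf : Measurable f) (hg : Measurable g) :
    ∫⁻ x, ∫⁻ y, f y * g (x - y) ∂μ ∂μ = (∫⁻ x, f x ∂μ) * ∫⁻ x, g x ∂μ := by
  rw [lintegral_lintegral_swap (by fun_prop), ← lintegral_mul_const'' _ hf.aemeasurable]
  refine lintegral_congr fun y => ?_
  rw [lintegral_const_mul _ (by fun_prop), lintegral_sub_right_eq_self g y]

theorem lintegral_Ici_sq_ofReal_exp_mul_le {ν : ℝ} (hν : 0 < ν) (s a : ℝ) :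
    ∫⁻ t in Ici s, (ENNReal.ofReal (exp (-ν * (t - s) * a ^ 2)) * ENNReal.ofReal a) ^ 2 ≤
      (ENNReal.ofReal (2 * ν))⁻¹ := by
  rcases le_or_gt a 0 with ha | ha
  · simp [ENNReal.ofReal_of_nonpos ha]
  set b := 2 * ν * a ^ 2 with hb_def
  have hb : 0 < b := by positivity
  have hsq : ∀ t, (ENNReal.ofReal (exp (-ν * (t - s) * a ^ 2)) * ENNReal.ofReal a) ^ 2 =
      ENNReal.ofReal (a ^ 2 * exp (b * s) * exp (-b * t)) := by
    intro t
    rw [← ENNReal.ofReal_mul (exp_nonneg _), ← ENNReal.ofReal_pow (by positivity), mul_pow,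
      ← exp_nat_mul, mul_assoc (a ^ 2), ← exp_add]
    push_cast
    rw [hb_def]
    ring_nf
  have hint : ∫ t in Ioi s, a ^ 2 * exp (b * s) * exp (-b * t) = (2 * ν)⁻¹ := by
    rw [integral_const_mul, integral_exp_mul_Ioi (by linarith) s, neg_div_neg_eq, neg_mul,
      exp_neg]
    field_simp
    rw [hb_def]
    ring
  rw [lintegral_congr hsq, ← ofReal_integral_eq_lintegral_ofReal, integral_Ici_eq_integral_Ioi,
    hint, ENNReal.ofReal_inv_of_pos (by positivity)]
  · have h : IntegrableOn (fun t => exp (-b * t)) (Ioi s) :=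
      integrableOn_exp_mul_Ioi (by linarith) s
    exact (integrableOn_Ici_iff_integrableOn_Ioi).mpr (h.const_mul _)
  · exact Filter.Eventually.of_forall fun t => by positivity

section DuhamelKernel

variable {E : Type*} [NormedAddCommGroup E]

noncomputable def duhamelKernel (ν t : ℝ) (p : ℝ × E) : ℝ≥0∞ :=
  (Icc 0 t).indicator
    (fun s => ENNReal.ofReal (exp (-ν * (t - s) * ‖p.2‖ ^ 2)) * ENNReal.ofReal ‖p.2‖) p.1

theorem measurable_duhamelKernel [MeasurableSpace E] [OpensMeasurableSpace E] (ν : ℝ) :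
    Measurable (Function.uncurry (duhamelKernel (E := E) ν)) := by
  refine Measurable.ite ?_ (by fun_prop) measurable_const
  exact (measurableSet_le measurable_const (measurable_fst.comp measurable_snd)).inter
    (measurableSet_le (measurable_fst.comp measurable_snd) measurable_fst)

theorem lintegral_duhamelKernel_sq_le {ν : ℝ} (hν : 0 < ν) (p : ℝ × E) :
    ∫⁻ t, duhamelKernel ν t p ^ 2 ≤ (ENNReal.ofReal (2 * ν))⁻¹ :=
  calc ∫⁻ t, duhamelKernel ν t p ^ 2
      ≤ ∫⁻ t, (Ici p.1).indicator (fun t =>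
          (ENNReal.ofReal (exp (-ν * (t - p.1) * ‖p.2‖ ^ 2)) * ENNReal.ofReal ‖p.2‖) ^ 2) t := by
        refine lintegral_mono fun t => ?_
        by_cases hp : p.1 ∈ Icc 0 t
        · simp [duhamelKernel, hp, hp.2]
        · simp [duhamelKernel, hp]
    _ = ∫⁻ t in Ici p.1,
          (ENNReal.ofReal (exp (-ν * (t - p.1) * ‖p.2‖ ^ 2)) * ENNReal.ofReal ‖p.2‖) ^ 2 :=
        lintegral_indicator measurableSet_Ici _
    _ ≤ (ENNReal.ofReal (2 * ν))⁻¹ := lintegral_Ici_sq_ofReal_exp_mul_le hν p.1 ‖p.2‖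

theorem lintegral_lintegral_Icc_eq_lintegral_duhamelKernel [MeasurableSpace E]
    [OpensMeasurableSpace E] {μ : Measure E} [SFinite μ] {ν t T : ℝ} (htT : t ≤ T)
    {w : ℝ → E → ℝ≥0∞} (hw : Measurable (Function.uncurry w)) :
    ∫⁻ ξ, (∫⁻ s in Icc 0 t,
        ENNReal.ofReal (exp (-ν * (t - s) * ‖ξ‖ ^ 2)) * ENNReal.ofReal ‖ξ‖ * w s ξ) ∂μ =
      ∫⁻ p, duhamelKernel ν t p * Function.uncurry w p ∂(volume.restrict (Icc 0 T)).prod μ := by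
  have hK : Measurable (duhamelKernel (E := E) ν t) :=
    (measurable_duhamelKernel ν).comp measurable_prodMk_left
  rw [lintegral_prod_symm (fun p => duhamelKernel ν t p * Function.uncurry w p)
    (hK.mul hw).aemeasurable]
  refine lintegral_congr fun ξ => ?_
  simp only [duhamelKernel, Function.uncurry_apply_pair]
  rw [← lintegral_congr fun s => indicator_mul_left (Icc 0 t) _ (w · ξ),
    setLIntegral_indicator measurableSet_Icc,
    inter_eq_left.mpr (Icc_subset_Icc le_rfl htT)]

end DuhamelKernel

theorem stmt_2_general (ν T : ℝ) (hν : 0 < ν)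
    (F G : ℝ → EuclideanSpace ℝ (Fin 3) → ENNReal)
    (hF : Measurable (Function.uncurry F)) (hG : Measurable (Function.uncurry G))
    (H : ℝ → EuclideanSpace ℝ (Fin 3) → ENNReal)
    (hH : ∀ t ξ, H t ξ =
      ∫⁻ s in Set.Icc (0 : ℝ) t,
        ENNReal.ofReal (Real.exp (-ν * (t - s) * ‖ξ‖ ^ 2)) * ENNReal.ofReal ‖ξ‖ *
          ∫⁻ η, F s η * G s (ξ - η)) :
    (∫⁻ t in Set.Icc (0 : ℝ) T, (∫⁻ ξ, H t ξ) ^ 2) ^ (1 / 2 : ℝ) ≤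
      (ENNReal.ofReal (2 * ν)) ^ (-(1 / 2) : ℝ) *
        ((∫⁻ s in Set.Icc (0 : ℝ) T, (∫⁻ ξ, F s ξ) ^ 2) ^ (1 / 2 : ℝ) *
          (∫⁻ s in Set.Icc (0 : ℝ) T, (∫⁻ ξ, G s ξ) ^ 2) ^ (1 / 2 : ℝ)) := by
  set w := fun s ξ => ∫⁻ η, F s η * G s (ξ - η)
  have hw : Measurable (Function.uncurry w) :=
    Measurable.lintegral_prod_right' (by fun_prop :
      Measurable fun z : (ℝ × EuclideanSpace ℝ (Fin 3)) × EuclideanSpace ℝ (Fin 3) =>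
        F z.1.1 z.2 * G z.1.1 (z.1.2 - z.2))
  have hFG : ∫⁻ p, Function.uncurry w p ∂(volume.restrict (Icc 0 T)).prod volume =
      ∫⁻ s in Icc 0 T, (∫⁻ ξ, F s ξ) * ∫⁻ ξ, G s ξ := by
    rw [lintegral_prod _ hw.aemeasurable]
    exact lintegral_congr fun s =>
      lintegral_lintegral_mul_sub (hF.comp measurable_prodMk_left) (hG.comp measurable_prodMk_left)
  have hH2 : ∫⁻ t in Icc 0 T, (∫⁻ ξ, H t ξ) ^ 2 ≤
      (ENNReal.ofReal (2 * ν))⁻¹ * (∫⁻ s in Icc 0 T, (∫⁻ ξ, F s ξ) * ∫⁻ ξ, G s ξ) ^ 2 := by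
    rw [← hFG, setLIntegral_congr_fun measurableSet_Icc fun t ht => by
      simp_rw [hH]
      rw [lintegral_lintegral_Icc_eq_lintegral_duhamelKernel ht.2 hw]]
    exact lintegral_sq_lintegral_mul_le (measurable_duhamelKernel ν)
      (fun p => (setLIntegral_le_lintegral _ _).trans (lintegral_duhamelKernel_sq_le hν p)) hw
  calc (∫⁻ t in Icc 0 T, (∫⁻ ξ, H t ξ) ^ 2) ^ (1 / 2 : ℝ)
      ≤ ((ENNReal.ofReal (2 * ν))⁻¹ * (∫⁻ s in Icc 0 T, (∫⁻ ξ, F s ξ) * ∫⁻ ξ, G s ξ) ^ 2) ^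
          (1 / 2 : ℝ) := by gcongr
    _ = ENNReal.ofReal (2 * ν) ^ (-(1 / 2) : ℝ) *
          ∫⁻ s in Icc 0 T, (∫⁻ ξ, F s ξ) * ∫⁻ ξ, G s ξ := by
        rw [ENNReal.mul_rpow_of_nonneg _ _ (by norm_num), ENNReal.sq_rpow_one_half,
          ENNReal.inv_rpow, ← ENNReal.rpow_neg]
    _ ≤ _ := by
        gcongr
        exact lintegral_mul_le_lintegral_sq_rpow_mul (by fun_prop) (by fun_prop)

/-- Proposition 2.2 (bilinear estimate): with
`H(t,ξ) = ∫₀ᵗ e^{−ν(t−s)|ξ|²} |ξ| (F(s,·) ∗ G(s,·))(ξ) ds`, one has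
`‖H‖_{L²([0,T];χ⁰)} ≤ (2ν)^{−1/2} ‖F‖_{L²([0,T];χ⁰)} ‖G‖_{L²([0,T];χ⁰)}`. -/
theorem stmt_2 (ν T : ℝ) (hν : 0 < ν) (hT : 0 < T)
    (F G : ℝ → EuclideanSpace ℝ (Fin 3) → ENNReal)
    (hF : Measurable (Function.uncurry F)) (hG : Measurable (Function.uncurry G))
    (H : ℝ → EuclideanSpace ℝ (Fin 3) → ENNReal)
    (hH : ∀ t ξ, H t ξ =
      ∫⁻ s in Set.Icc (0 : ℝ) t,
        ENNReal.ofReal (Real.exp (-ν * (t - s) * ‖ξ‖ ^ 2)) * ENNReal.ofReal ‖ξ‖ *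
          ∫⁻ η, F s η * G s (ξ - η)) :
    (∫⁻ t in Set.Icc (0 : ℝ) T, (∫⁻ ξ, H t ξ) ^ 2) ^ (1 / 2 : ℝ) ≤
      (ENNReal.ofReal (2 * ν)) ^ (-(1 / 2) : ℝ) *
        ((∫⁻ s in Set.Icc (0 : ℝ) T, (∫⁻ ξ, F s ξ) ^ 2) ^ (1 / 2 : ℝ) *
          (∫⁻ s in Set.Icc (0 : ℝ) T, (∫⁻ ξ, G s ξ) ^ 2) ^ (1 / 2 : ℝ)) :=
  stmt_2_general ν T hν F G hF hG H hH
end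

section
/- Let ν > 0, T > 0, and let F : ℝ³ → [0,∞) be measurable. Then ( ∫₀ᵀ ( ∫_{ℝ³} e^{−νt|ξ|²} F(ξ) dξ )² dt )^{1/2} ≤ (2ν)^{−1/2} ∫_{ℝ³} |ξ|⁻¹ F(ξ) dξ. -/
/-!
Expanding the square, `(∫ e^{-νt|ξ|²} F(ξ) dξ)²` becomes a double integral over `(ξ, η)`, and after
Tonelli the time integral is `∫₀^∞ e^{-νt(|ξ|² + |η|²)} dt = (ν(|ξ|² + |η|²))⁻¹ ≤ (2ν|ξ||η|)⁻¹`
by AM-GM, so the double integral factors as `(2ν)⁻¹ (∫ |ξ|⁻¹ F(ξ) dξ)²`.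
-/

open MeasureTheory Set Real
open scoped ENNReal

theorem lintegral_sq_lintegral_le {α β : Type*} [MeasurableSpace α] [MeasurableSpace β]
    {μ : Measure α} {ν : Measure β} [SFinite μ] [SFinite ν] {G : α → β → ℝ≥0∞}
    (hG : Measurable (Function.uncurry G)) {w : β → ℝ≥0∞} (hw : Measurable w) {C : ℝ≥0∞}
    (h : ∀ x y, ∫⁻ t, G t x * G t y ∂μ ≤ C * (w x * w y)) :
    ∫⁻ t, (∫⁻ x, G t x ∂ν) ^ 2 ∂μ ≤ C * (∫⁻ x, w x ∂ν) ^ 2 := by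
  have hGt (t : α) : Measurable (G t) := hG.of_uncurry_left
  have hG₂ : Measurable fun p : (α × β) × β => G p.1.1 p.1.2 * G p.1.1 p.2 :=
    (hG.comp measurable_fst).mul (hG.comp (measurable_fst.fst.prodMk measurable_snd))
  calc ∫⁻ t, (∫⁻ x, G t x ∂ν) ^ 2 ∂μ = ∫⁻ t, ∫⁻ x, ∫⁻ y, G t x * G t y ∂ν ∂ν ∂μ := by
        simp_rw [sq, lintegral_lintegral_mul (hGt _).aemeasurable (hGt _).aemeasurable]
    _ = ∫⁻ x, ∫⁻ y, ∫⁻ t, G t x * G t y ∂μ ∂ν ∂ν := by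
        rw [lintegral_lintegral_swap hG₂.lintegral_prod_right'.aemeasurable]
        refine lintegral_congr fun x => lintegral_lintegral_swap ?_
        exact (hG₂.comp
          ((measurable_fst.prodMk measurable_const).prodMk measurable_snd)).aemeasurable
    _ ≤ ∫⁻ x, ∫⁻ y, C * w x * w y ∂ν ∂ν := by
        gcongr with x y
        exact (h x y).trans_eq (mul_assoc _ _ _).symm
    _ = C * (∫⁻ x, w x ∂ν) ^ 2 := by
        simp_rw [lintegral_const_mul _ hw, lintegral_mul_const _ (hw.const_mul C),
          lintegral_const_mul _ hw, sq, mul_assoc]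

theorem lintegral_Ioi_exp_neg_mul {c : ℝ} (hc : 0 < c) :
    ∫⁻ t in Ioi 0, ENNReal.ofReal (exp (-c * t)) = (ENNReal.ofReal c)⁻¹ := by
  rw [← ofReal_integral_eq_lintegral_ofReal (integrableOn_exp_mul_Ioi (neg_lt_zero.2 hc) 0)
    (Filter.Eventually.of_forall fun _ => (exp_pos _).le), integral_exp_mul_Ioi (neg_lt_zero.2 hc),
    ← ENNReal.ofReal_inv_of_pos hc]
  simp

theorem lintegral_Ici_exp_mul_exp_le {ν : ℝ} (hν : 0 ≤ ν) (p q : ℝ) :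
    ∫⁻ t in Ici 0, ENNReal.ofReal (exp (-ν * t * p ^ 2)) * ENNReal.ofReal (exp (-ν * t * q ^ 2))
      ≤ (ENNReal.ofReal (2 * ν * p * q))⁻¹ := by
  rcases le_or_gt (2 * ν * p * q) 0 with hpq | hpq
  · simp [ENNReal.ofReal_eq_zero.2 hpq]
  have hc : 2 * ν * p * q ≤ ν * (p ^ 2 + q ^ 2) := by nlinarith [mul_nonneg hν (sq_nonneg (p - q))]
  calc _ = ∫⁻ t in Ioi 0, ENNReal.ofReal (exp (-(ν * (p ^ 2 + q ^ 2)) * t)) := by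
        rw [restrict_Ioi_eq_restrict_Ici]
        refine lintegral_congr fun t => ?_
        rw [← ENNReal.ofReal_mul (exp_pos _).le, ← exp_add]
        ring_nf
    _ = (ENNReal.ofReal (ν * (p ^ 2 + q ^ 2)))⁻¹ := lintegral_Ioi_exp_neg_mul (hpq.trans_le hc)
    _ ≤ _ := ENNReal.inv_le_inv.2 (ENNReal.ofReal_le_ofReal hc)

theorem ENNReal.rpow_half_inv_mul_sq (a b : ℝ≥0∞) :
    (a⁻¹ * b ^ 2) ^ (1 / 2 : ℝ) = a ^ (-(1 / 2) : ℝ) * b := by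
  rw [ENNReal.mul_rpow_of_nonneg _ _ (by norm_num), ENNReal.inv_rpow, ← ENNReal.rpow_neg,
    ← ENNReal.rpow_natCast, ← ENNReal.rpow_mul]
  norm_num

theorem stmt_3_general (ν T : ℝ) (hν : 0 < ν)
    (F : EuclideanSpace ℝ (Fin 3) → ENNReal) (hF : Measurable F) :
    (∫⁻ t in Set.Icc (0 : ℝ) T,
        (∫⁻ ξ, ENNReal.ofReal (Real.exp (-ν * t * ‖ξ‖ ^ 2)) * F ξ) ^ 2) ^ (1 / 2 : ℝ) ≤
      (ENNReal.ofReal (2 * ν)) ^ (-(1 / 2) : ℝ) * ∫⁻ ξ, (ENNReal.ofReal ‖ξ‖)⁻¹ * F ξ := by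
  rw [← ENNReal.rpow_half_inv_mul_sq]
  gcongr
  refine lintegral_sq_lintegral_le (by fun_prop) (by fun_prop) fun ξ η => ?_
  calc ∫⁻ t in Icc 0 T, ENNReal.ofReal (exp (-ν * t * ‖ξ‖ ^ 2)) * F ξ *
          (ENNReal.ofReal (exp (-ν * t * ‖η‖ ^ 2)) * F η)
      = (∫⁻ t in Icc 0 T, ENNReal.ofReal (exp (-ν * t * ‖ξ‖ ^ 2)) *
          ENNReal.ofReal (exp (-ν * t * ‖η‖ ^ 2))) * (F ξ * F η) := by
        rw [← lintegral_mul_const _ (by fun_prop)]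
        simp_rw [mul_mul_mul_comm]
    _ ≤ (ENNReal.ofReal (2 * ν * ‖ξ‖ * ‖η‖))⁻¹ * (F ξ * F η) := by
        gcongr
        exact (lintegral_mono_set Icc_subset_Ici_self).trans
          (lintegral_Ici_exp_mul_exp_le hν.le _ _)
    _ = (ENNReal.ofReal (2 * ν))⁻¹ *
          ((ENNReal.ofReal ‖ξ‖)⁻¹ * F ξ * ((ENNReal.ofReal ‖η‖)⁻¹ * F η)) := by
        rw [ENNReal.ofReal_mul (by positivity), ENNReal.ofReal_mul (by positivity),
          ENNReal.mul_inv (.inr ENNReal.ofReal_ne_top) (.inl (by finiteness)),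
          ENNReal.mul_inv (.inr ENNReal.ofReal_ne_top) (.inl ENNReal.ofReal_ne_top)]
        ring

/-- Heat semigroup estimate (3.1):
`‖e^{νtΔ}u₀‖_{L²([0,T];χ⁰)} ≤ (2ν)^{−1/2} ‖u₀‖_{χ^{−1}}`, stated on the Fourier
side for `F = |û₀|`. -/
theorem stmt_3 (ν T : ℝ) (hν : 0 < ν) (hT : 0 < T)
    (F : EuclideanSpace ℝ (Fin 3) → ENNReal) (hF : Measurable F) :
    (∫⁻ t in Set.Icc (0 : ℝ) T,
        (∫⁻ ξ, ENNReal.ofReal (Real.exp (-ν * t * ‖ξ‖ ^ 2)) * F ξ) ^ 2) ^ (1 / 2 : ℝ) ≤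
      (ENNReal.ofReal (2 * ν)) ^ (-(1 / 2) : ℝ) * ∫⁻ ξ, (ENNReal.ofReal ‖ξ‖)⁻¹ * F ξ :=
  stmt_3_general ν T hν F hF
end

section
/- Let ν > 0, T > 0, and let F, G : [0,T] × ℝ³ → [0,∞) be measurable. Define H(t,ξ) = ∫₀ᵗ e^{−ν(t−s)|ξ|²} |ξ| (F(s,·) ∗ G(s,·))(ξ) ds, where ∗ denotes convolution in ξ on ℝ³. Then ∫₀ᵀ ∫_{ℝ³} |ξ| H(t,ξ) dξ dt ≤ ν^{−1} ( ∫₀ᵀ ( ∫_{ℝ³} F(s,ξ) dξ )² ds )^{1/2} ( ∫₀ᵀ ( ∫_{ℝ³} G(s,ξ) dξ )² ds )^{1/2}. -/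
/-!
Write `K(s,ξ) = (F(s,·) ∗ G(s,·))(ξ)`. After Tonelli the `t`-integral falls on the heat factor
alone, and `∫_s^∞ |ξ|² e^{-ν(t-s)|ξ|²} dt ≤ ν⁻¹` uniformly in `ξ`: the `|ξ|²` gained from the
weight and the Duhamel term is exactly what the heat semigroup absorbs in time. What remains is
`ν⁻¹ ∫₀ᵀ ∫ K = ν⁻¹ ∫₀ᵀ ‖F(s)‖₁ ‖G(s)‖₁ ds`, and Cauchy–Schwarz in `s` finishes.
-/

open MeasureTheory Set Real
open scoped ENNReal

theorem lintegral_lintegral_mul_sub_eq_mul {G : Type*} [MeasurableSpace G] [AddGroup G]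
    [MeasurableAdd₂ G] [MeasurableNeg G] {μ : Measure G} [SFinite μ] [μ.IsAddRightInvariant]
    {f g : G → ℝ≥0∞} (hf : Measurable f) (hg : Measurable g) :
    ∫⁻ ξ, ∫⁻ η, f η * g (ξ - η) ∂μ ∂μ = (∫⁻ η, f η ∂μ) * ∫⁻ ξ, g ξ ∂μ := by
  rw [lintegral_lintegral_swap (by fun_prop)]
  calc ∫⁻ η, ∫⁻ ξ, f η * g (ξ - η) ∂μ ∂μ
      = ∫⁻ η, f η * ∫⁻ ξ, g (ξ - η) ∂μ ∂μ :=
        lintegral_congr fun η => lintegral_const_mul _ (by fun_prop)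
    _ = ∫⁻ η, f η * ∫⁻ ξ, g ξ ∂μ ∂μ := by simp_rw [lintegral_sub_right_eq_self g]
    _ = _ := lintegral_mul_const _ hf

theorem lintegral_lintegral_lintegral_swap {α β γ : Type*} [MeasurableSpace α]
    [MeasurableSpace β] [MeasurableSpace γ] {μ : Measure α} {ν : Measure β} {ρ : Measure γ}
    [SFinite μ] [SFinite ν] [SFinite ρ] {f : α → β → γ → ℝ≥0∞}
    (hf : Measurable fun p : (α × β) × γ => f p.1.1 p.1.2 p.2) :
    ∫⁻ a, ∫⁻ c, ∫⁻ b, f a b c ∂ν ∂ρ ∂μ = ∫⁻ b, ∫⁻ c, ∫⁻ a, f a b c ∂μ ∂ρ ∂ν :=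
  calc ∫⁻ a, ∫⁻ c, ∫⁻ b, f a b c ∂ν ∂ρ ∂μ
      = ∫⁻ a, ∫⁻ b, ∫⁻ c, f a b c ∂ρ ∂ν ∂μ := lintegral_congr fun _ =>
        lintegral_lintegral_swap
          (hf.comp ((measurable_const.prodMk measurable_snd).prodMk measurable_fst)).aemeasurable
    _ = ∫⁻ b, ∫⁻ a, ∫⁻ c, f a b c ∂ρ ∂μ ∂ν :=
        lintegral_lintegral_swap hf.lintegral_prod_right'.aemeasurable
    _ = _ := lintegral_congr fun _ =>
        lintegral_lintegral_swap
          (hf.comp ((measurable_fst.prodMk measurable_const).prodMk measurable_snd)).aemeasurable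

theorem ENNReal.lintegral_mul_le_L2_mul_L2 {α : Type*} [MeasurableSpace α] (μ : Measure α)
    {f g : α → ℝ≥0∞} (hf : AEMeasurable f μ) (hg : AEMeasurable g μ) :
    ∫⁻ a, f a * g a ∂μ ≤
      (∫⁻ a, f a ^ 2 ∂μ) ^ (1 / 2 : ℝ) * (∫⁻ a, g a ^ 2 ∂μ) ^ (1 / 2 : ℝ) := by
  simpa only [Pi.mul_apply, ENNReal.rpow_two] using
    ENNReal.lintegral_mul_le_Lp_mul_Lq μ Real.HolderConjugate.two_two hf hg

theorem lintegral_Ici_ofReal_exp_neg_mul {a : ℝ} (ha : 0 < a) :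
    ∫⁻ τ in Ici 0, ENNReal.ofReal (exp (-(a * τ))) = ENNReal.ofReal a⁻¹ := by
  rw [← Measure.restrict_congr_set Ioi_ae_eq_Ici, ← ofReal_integral_eq_lintegral_ofReal]
  · congr 1
    simp_rw [← neg_mul]
    rw [integral_exp_mul_Ioi (by linarith)]
    simp [neg_div, one_div]
  · have := exp_neg_integrableOn_Ioi 0 ha
    simp only [neg_mul] at this
    exact this
  · exact Filter.Eventually.of_forall fun τ => (exp_pos _).le

section HeatWeight

variable {E : Type*} [NormedAddCommGroup E] {ν : ℝ}

-- `|ξ|²` is split as `|ξ| · … · |ξ|` to match the weight times the Duhamel integrand.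
noncomputable def heatWeight (ν : ℝ) (ξ : E) : ℝ → ℝ≥0∞ :=
  (Ici 0).indicator fun τ =>
    ENNReal.ofReal ‖ξ‖ * ENNReal.ofReal (exp (-ν * τ * ‖ξ‖ ^ 2)) * ENNReal.ofReal ‖ξ‖

theorem measurable_heatWeight [MeasurableSpace E] [OpensMeasurableSpace E] (ν : ℝ) :
    Measurable fun p : E × ℝ => heatWeight ν p.1 p.2 := by
  simp only [heatWeight, indicator, mem_Ici]
  exact Measurable.ite (measurableSet_le measurable_const measurable_snd) (by fun_prop)
    measurable_const

theorem lintegral_heatWeight_le (hν : 0 < ν) (ξ : E) :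
    ∫⁻ τ, heatWeight ν ξ τ ≤ (ENNReal.ofReal ν)⁻¹ := by
  rcases eq_or_ne ξ 0 with rfl | hξ
  · simp [heatWeight]
  have hc : 0 < ‖ξ‖ ^ 2 := by positivity
  have hweight : ∀ τ, ENNReal.ofReal ‖ξ‖ * ENNReal.ofReal (exp (-ν * τ * ‖ξ‖ ^ 2)) *
      ENNReal.ofReal ‖ξ‖ =
        ENNReal.ofReal (‖ξ‖ ^ 2) * ENNReal.ofReal (exp (-(ν * ‖ξ‖ ^ 2 * τ))) := by
    intro τ
    rw [ENNReal.ofReal_pow (norm_nonneg ξ)]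
    ring_nf
  rw [heatWeight, lintegral_indicator measurableSet_Ici]
  simp_rw [hweight]
  rw [lintegral_const_mul _ (by fun_prop), lintegral_Ici_ofReal_exp_neg_mul (by positivity),
    ← ENNReal.ofReal_mul hc.le, ← ENNReal.ofReal_inv_of_pos hν]
  apply le_of_eq
  congr 1
  field_simp

theorem lintegral_heatWeight_sub_le (hν : 0 < ν) (ξ : E) (s : ℝ) (I : Set ℝ) :
    ∫⁻ t in I, heatWeight ν ξ (t - s) ≤ (ENNReal.ofReal ν)⁻¹ :=
  calc ∫⁻ t in I, heatWeight ν ξ (t - s)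
      ≤ ∫⁻ t, heatWeight ν ξ (t - s) := setLIntegral_le_lintegral _ _
    _ = ∫⁻ τ, heatWeight ν ξ τ := lintegral_sub_right_eq_self _ s
    _ ≤ _ := lintegral_heatWeight_le hν ξ

theorem norm_mul_lintegral_Icc_le_lintegral_heatWeight {K : ℝ → E → ℝ≥0∞} {t T : ℝ}
    (ht : t ≤ T) (ξ : E) :
    ENNReal.ofReal ‖ξ‖ * ∫⁻ s in Icc 0 t,
        ENNReal.ofReal (exp (-ν * (t - s) * ‖ξ‖ ^ 2)) * ENNReal.ofReal ‖ξ‖ * K s ξ ≤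
      ∫⁻ s in Icc 0 T, heatWeight ν ξ (t - s) * K s ξ := by
  rw [← lintegral_const_mul' _ _ ENNReal.ofReal_ne_top]
  calc _ = ∫⁻ s in Icc 0 t, heatWeight ν ξ (t - s) * K s ξ := by
        refine setLIntegral_congr_fun measurableSet_Icc fun s hs => ?_
        rw [heatWeight, indicator_of_mem (show t - s ∈ Ici 0 from sub_nonneg.2 hs.2)]
        ring
    _ ≤ _ := lintegral_mono_set (Icc_subset_Icc_right ht)

variable [MeasurableSpace E] [OpensMeasurableSpace E] {μ : Measure E} [SFinite μ]

theorem lintegral_Icc_lintegral_norm_mul_heat_le (hν : 0 < ν) {K : ℝ → E → ℝ≥0∞}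
    (hK : Measurable (Function.uncurry K)) (T : ℝ) :
    ∫⁻ t in Icc 0 T, ∫⁻ ξ, ENNReal.ofReal ‖ξ‖ * (∫⁻ s in Icc 0 t,
        ENNReal.ofReal (exp (-ν * (t - s) * ‖ξ‖ ^ 2)) * ENNReal.ofReal ‖ξ‖ * K s ξ) ∂μ ≤
      (ENNReal.ofReal ν)⁻¹ * ∫⁻ s in Icc 0 T, ∫⁻ ξ, K s ξ ∂μ := by
  have hmeas : Measurable fun p : (ℝ × ℝ) × E =>
      heatWeight ν p.2 (p.1.1 - p.1.2) * K p.1.2 p.2 :=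
    ((measurable_heatWeight ν).comp (measurable_snd.prodMk
      (measurable_fst.fst.sub measurable_fst.snd))).mul
      (hK.comp (measurable_fst.snd.prodMk measurable_snd))
  calc _ ≤ ∫⁻ t in Icc 0 T, ∫⁻ ξ, (∫⁻ s in Icc 0 T, heatWeight ν ξ (t - s) * K s ξ) ∂μ :=
        setLIntegral_mono' measurableSet_Icc fun t ht => lintegral_mono fun ξ =>
          norm_mul_lintegral_Icc_le_lintegral_heatWeight ht.2 ξ
    _ = ∫⁻ s in Icc 0 T, ∫⁻ ξ, (∫⁻ t in Icc 0 T, heatWeight ν ξ (t - s)) * K s ξ ∂μ := by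
        rw [lintegral_lintegral_lintegral_swap hmeas]
        refine lintegral_congr fun s => lintegral_congr fun ξ => lintegral_mul_const _ ?_
        exact (measurable_heatWeight ν).comp (measurable_const.prodMk (measurable_id.sub_const s))
    _ ≤ ∫⁻ s in Icc 0 T, ∫⁻ ξ, (ENNReal.ofReal ν)⁻¹ * K s ξ ∂μ := by
        gcongr with s ξ
        exact lintegral_heatWeight_sub_le hν ξ s _
    _ = _ := by
        simp_rw [lintegral_const_mul' _ _ (ENNReal.inv_ne_top.2 (ENNReal.ofReal_pos.2 hν).ne')]

end HeatWeight

theorem stmt_6_general (ν T : ℝ) (hν : 0 < ν)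
    (F G : ℝ → EuclideanSpace ℝ (Fin 3) → ENNReal)
    (hF : Measurable (Function.uncurry F)) (hG : Measurable (Function.uncurry G))
    (H : ℝ → EuclideanSpace ℝ (Fin 3) → ENNReal)
    (hH : ∀ t ξ, H t ξ =
      ∫⁻ s in Set.Icc (0 : ℝ) t,
        ENNReal.ofReal (Real.exp (-ν * (t - s) * ‖ξ‖ ^ 2)) * ENNReal.ofReal ‖ξ‖ *
          ∫⁻ η, F s η * G s (ξ - η)) :
    ∫⁻ t in Set.Icc (0 : ℝ) T, ∫⁻ ξ, ENNReal.ofReal ‖ξ‖ * H t ξ ≤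
      (ENNReal.ofReal ν)⁻¹ *
        ((∫⁻ s in Set.Icc (0 : ℝ) T, (∫⁻ ξ, F s ξ) ^ 2) ^ (1 / 2 : ℝ) *
          (∫⁻ s in Set.Icc (0 : ℝ) T, (∫⁻ ξ, G s ξ) ^ 2) ^ (1 / 2 : ℝ)) := by
  set K : ℝ → EuclideanSpace ℝ (Fin 3) → ℝ≥0∞ := fun s ξ => ∫⁻ η, F s η * G s (ξ - η)
  have hK : Measurable (Function.uncurry K) :=
    Measurable.lintegral_prod_right' <| (hF.comp (measurable_fst.fst.prodMk measurable_snd)).mul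
      (hG.comp (measurable_fst.fst.prodMk (measurable_fst.snd.sub measurable_snd)))
  have hK_total (s : ℝ) : ∫⁻ ξ, K s ξ = (∫⁻ ξ, F s ξ) * ∫⁻ ξ, G s ξ :=
    lintegral_lintegral_mul_sub_eq_mul hF.of_uncurry_left hG.of_uncurry_left
  simp_rw [hH]
  calc _ ≤ (ENNReal.ofReal ν)⁻¹ * ∫⁻ s in Icc 0 T, ∫⁻ ξ, K s ξ :=
        lintegral_Icc_lintegral_norm_mul_heat_le hν hK T
    _ = (ENNReal.ofReal ν)⁻¹ * ∫⁻ s in Icc 0 T, (∫⁻ ξ, F s ξ) * ∫⁻ ξ, G s ξ := by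
        simp_rw [hK_total]
    _ ≤ _ := by
        gcongr
        exact ENNReal.lintegral_mul_le_L2_mul_L2 _ hF.lintegral_prod_right'.aemeasurable
          hG.lintegral_prod_right'.aemeasurable

/-- Bilinear L¹-χ¹ estimate: with
`H(t,ξ) = ∫₀ᵗ e^{−ν(t−s)|ξ|²} |ξ| (F(s,·) ∗ G(s,·))(ξ) ds`,
`‖H‖_{L¹([0,T];χ¹)} ≤ ν⁻¹ ‖F‖_{L²([0,T];χ⁰)} ‖G‖_{L²([0,T];χ⁰)}`. -/
theorem stmt_6 (ν T : ℝ) (hν : 0 < ν) (hT : 0 < T)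
    (F G : ℝ → EuclideanSpace ℝ (Fin 3) → ENNReal)
    (hF : Measurable (Function.uncurry F)) (hG : Measurable (Function.uncurry G))
    (H : ℝ → EuclideanSpace ℝ (Fin 3) → ENNReal)
    (hH : ∀ t ξ, H t ξ =
      ∫⁻ s in Set.Icc (0 : ℝ) t,
        ENNReal.ofReal (Real.exp (-ν * (t - s) * ‖ξ‖ ^ 2)) * ENNReal.ofReal ‖ξ‖ *
          ∫⁻ η, F s η * G s (ξ - η)) :
    ∫⁻ t in Set.Icc (0 : ℝ) T, ∫⁻ ξ, ENNReal.ofReal ‖ξ‖ * H t ξ ≤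
      (ENNReal.ofReal ν)⁻¹ *
        ((∫⁻ s in Set.Icc (0 : ℝ) T, (∫⁻ ξ, F s ξ) ^ 2) ^ (1 / 2 : ℝ) *
          (∫⁻ s in Set.Icc (0 : ℝ) T, (∫⁻ ξ, G s ξ) ^ 2) ^ (1 / 2 : ℝ)) :=
  stmt_6_general ν T hν F G hF hG H hH
end

section
/- Let ν > 0, T > 0, let V₀ : ℝ³ → ℂ and f : [0,T] × ℝ³ → ℂ be measurable with ∫_{ℝ³} |ξ|⁻¹ |V₀(ξ)| dξ < ∞ and ∫₀ᵀ ∫_{ℝ³} |ξ|⁻¹ |f(s,ξ)| dξ ds < ∞, and define V(t,ξ) = e^{−νt|ξ|²} V₀(ξ) + ∫₀ᵗ e^{−ν(t−s)|ξ|²} f(s,ξ) ds. Then for every t₀ ∈ [0,T], sup_{0 ≤ t ≤ t₀} ∫_{ℝ³} |ξ|⁻¹ |V(t,ξ)| dξ + ν ∫₀^{t₀} ∫_{ℝ³} |ξ| |V(t,ξ)| dξ dt ≤ 2 ( ∫_{ℝ³} |ξ|⁻¹ |V₀(ξ)| dξ + ∫₀^{t₀} ∫_{ℝ³} |ξ|⁻¹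 |f(s,ξ)| dξ ds ). -/
/-!
Dominate `‖V t ξ‖` by the Duhamel formula applied to `‖V₀ ξ‖` and `‖f s ξ‖`. Since the heat
factor `e^{-ντ|ξ|²}` is at most `1`, this gives the `L^∞ χ^{-1}` bound at once. For the
`L¹ χ¹` bound, integrate in time first: `ν |ξ| ∫₀^∞ e^{-ντ|ξ|²} dτ = |ξ|⁻¹` trades the weight
`|ξ|` for `|ξ|⁻¹`, and for the forcing term the time integral of a convolution is at most the
product of the time integrals. Each of the two terms on the left is thus bounded by
`‖V₀‖_{χ^{-1}} + ‖f‖_{L¹χ^{-1}}`.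
-/

open MeasureTheory Set Real Function
open scoped ENNReal

lemma lintegral_Ici_exp_neg_mul {c : ℝ} (hc : 0 < c) :
    ∫⁻ τ in Ici 0, ENNReal.ofReal (exp (-c * τ)) = ENNReal.ofReal c⁻¹ := by
  rw [setLIntegral_congr Ioi_ae_eq_Ici.symm, ← ofReal_integral_eq_lintegral_ofReal
      (by simpa using (exp_neg_integrableOn_Ioi 0 hc).integrable)
      (.of_forall fun _ => (exp_pos _).le),
    integral_exp_mul_Ioi (neg_lt_zero.2 hc)]
  simp

lemma ofReal_mul_lintegral_Ici_heat_le {ν : ℝ} (hν : 0 < ν) (a : ℝ) :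
    ENNReal.ofReal ν * ENNReal.ofReal a *
        ∫⁻ τ in Ici 0, ENNReal.ofReal (exp (-ν * τ * a ^ 2)) ≤ (ENNReal.ofReal a)⁻¹ := by
  rcases le_or_gt a 0 with ha | ha
  · simp [ENNReal.ofReal_of_nonpos ha]
  have hc : 0 < ν * a ^ 2 := by positivity
  simp_rw [show ∀ τ, -ν * τ * a ^ 2 = -(ν * a ^ 2) * τ from fun τ => by ring]
  rw [lintegral_Ici_exp_neg_mul hc, ← ENNReal.ofReal_mul hν.le,
    ← ENNReal.ofReal_mul (by positivity), ← ENNReal.ofReal_inv_of_pos ha]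
  exact le_of_eq (congrArg _ (by field_simp))

lemma setLIntegral_Icc_setLIntegral_Icc_sub_mul_le {h b : ℝ → ℝ≥0∞} (hh : Measurable h)
    (hb : Measurable b) (T : ℝ) :
    ∫⁻ t in Icc 0 T, ∫⁻ s in Icc 0 t, h (t - s) * b s ≤
      (∫⁻ τ in Ici 0, h τ) * ∫⁻ s in Icc 0 T, b s := by
  set h' := (Ici 0).indicator h
  have hh' : Measurable h' := hh.indicator measurableSet_Ici
  calc ∫⁻ t in Icc 0 T, ∫⁻ s in Icc 0 t, h (t - s) * b s
      ≤ ∫⁻ t in Icc 0 T, ∫⁻ s in Icc 0 T, h' (t - s) * b s := by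
        refine setLIntegral_mono' measurableSet_Icc fun t ht => ?_
        calc ∫⁻ s in Icc 0 t, h (t - s) * b s = ∫⁻ s in Icc 0 t, h' (t - s) * b s :=
              setLIntegral_congr_fun measurableSet_Icc fun s hs =>
                congrArg (· * b s) (indicator_of_mem (mem_Ici.2 (sub_nonneg.2 hs.2)) h).symm
          _ ≤ _ := lintegral_mono_set (Icc_subset_Icc_right ht.2)
    _ ≤ ∫⁻ t, ∫⁻ s in Icc 0 T, h' (t - s) * b s := setLIntegral_le_lintegral _ _
    _ = ∫⁻ s in Icc 0 T, ∫⁻ t, h' (t - s) * b s :=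
        lintegral_lintegral_swap ((hh'.comp (measurable_fst.sub measurable_snd)).mul
          (hb.comp measurable_snd)).aemeasurable
    _ = ∫⁻ s in Icc 0 T, (∫⁻ τ in Ici 0, h τ) * b s := by
        congr 1 with s
        rw [lintegral_mul_const (f := fun t => h' (t - s)) _
            (hh'.comp (measurable_sub_const s)),
          lintegral_sub_right_eq_self h' s, lintegral_indicator measurableSet_Ici]
    _ = _ := lintegral_const_mul _ hb

lemma measurable_setLIntegral_Icc {α : Type*} [MeasurableSpace α] {g : α → ℝ → ℝ≥0∞}
    (hg : Measurable (uncurry g)) {τ : α → ℝ} (hτ : Measurable τ) :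
    Measurable fun x => ∫⁻ s in Icc 0 (τ x), g x s := by
  have hS : MeasurableSet {p : α × ℝ | p.2 ∈ Icc 0 (τ p.1)} :=
    (measurableSet_le measurable_const measurable_snd).inter
      (measurableSet_le measurable_snd (hτ.comp measurable_fst))
  have hind : (fun x => ∫⁻ s in Icc 0 (τ x), g x s) =
      fun x => ∫⁻ s, {p : α × ℝ | p.2 ∈ Icc 0 (τ p.1)}.indicator (uncurry g) (x, s) :=
    funext fun x => by rw [← lintegral_indicator measurableSet_Icc]; rfl
  exact hind ▸ (hg.indicator hS).lintegral_prod_right'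

noncomputable def duhamelMajorant (ν a : ℝ) (u : ℝ≥0∞) (b : ℝ → ℝ≥0∞) (t : ℝ) : ℝ≥0∞ :=
  ENNReal.ofReal (exp (-ν * t * a ^ 2)) * u +
    ∫⁻ s in Icc 0 t, ENNReal.ofReal (exp (-ν * (t - s) * a ^ 2)) * b s

section DuhamelMajorant

variable {ν a : ℝ} {u : ℝ≥0∞} {b : ℝ → ℝ≥0∞}

lemma duhamelMajorant_le_add_setLIntegral (hν : 0 ≤ ν) {t t₀ : ℝ} (ht : t ∈ Icc 0 t₀) :
    duhamelMajorant ν a u b t ≤ u + ∫⁻ s in Icc 0 t₀, b s := by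
  have hle : ∀ τ, 0 ≤ τ → ENNReal.ofReal (exp (-ν * τ * a ^ 2)) ≤ 1 := fun τ hτ =>
    ENNReal.ofReal_le_one.2 <| exp_le_one_iff.2 <| by
      nlinarith [mul_nonneg (mul_nonneg hν hτ) (sq_nonneg a)]
  refine add_le_add (mul_le_of_le_one_left' (hle t ht.1)) ?_
  calc ∫⁻ s in Icc 0 t, ENNReal.ofReal (exp (-ν * (t - s) * a ^ 2)) * b s
      ≤ ∫⁻ s in Icc 0 t, b s := setLIntegral_mono' measurableSet_Icc fun s hs =>
        mul_le_of_le_one_left' (hle _ (sub_nonneg.2 hs.2))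
    _ ≤ _ := lintegral_mono_set (Icc_subset_Icc_right ht.2)

lemma ofReal_mul_setLIntegral_ofReal_mul_duhamelMajorant_le (hν : 0 < ν) (hb : Measurable b)
    (t₀ : ℝ) :
    ENNReal.ofReal ν * ∫⁻ t in Icc 0 t₀, ENNReal.ofReal a * duhamelMajorant ν a u b t ≤
      (ENNReal.ofReal a)⁻¹ * (u + ∫⁻ s in Icc 0 t₀, b s) := by
  set K := ∫⁻ τ in Ici 0, ENNReal.ofReal (exp (-ν * τ * a ^ 2))
  have hheat : Measurable fun τ : ℝ => ENNReal.ofReal (exp (-ν * τ * a ^ 2)) := by fun_prop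
  have hfree : ∫⁻ t in Icc 0 t₀, ENNReal.ofReal (exp (-ν * t * a ^ 2)) * u ≤ K * u := by
    rw [lintegral_mul_const _ hheat]
    exact mul_le_mul_left (lintegral_mono_set Icc_subset_Ici_self) _
  have hforced := setLIntegral_Icc_setLIntegral_Icc_sub_mul_le hheat hb t₀
  calc ENNReal.ofReal ν * ∫⁻ t in Icc 0 t₀, ENNReal.ofReal a * duhamelMajorant ν a u b t
      = ENNReal.ofReal ν * (ENNReal.ofReal a *
          ((∫⁻ t in Icc 0 t₀, ENNReal.ofReal (exp (-ν * t * a ^ 2)) * u) +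
            ∫⁻ t in Icc 0 t₀, ∫⁻ s in Icc 0 t,
              ENNReal.ofReal (exp (-ν * (t - s) * a ^ 2)) * b s)) := by
        unfold duhamelMajorant
        rw [lintegral_const_mul' _ _ ENNReal.ofReal_ne_top,
          lintegral_add_left (hheat.mul_const u)]
    _ ≤ ENNReal.ofReal ν * (ENNReal.ofReal a * (K * u + K * ∫⁻ s in Icc 0 t₀, b s)) := by
        gcongr
    _ = ENNReal.ofReal ν * ENNReal.ofReal a * K * (u + ∫⁻ s in Icc 0 t₀, b s) := by ring
    _ ≤ _ := by gcongr; exact ofReal_mul_lintegral_Ici_heat_le hν a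

lemma measurable_duhamelMajorant {α : Type*} [MeasurableSpace α] {a : α → ℝ} {u : α → ℝ≥0∞}
    {b : α → ℝ → ℝ≥0∞} (ha : Measurable a) (hu : Measurable u) (hb : Measurable (uncurry b)) :
    Measurable fun p : ℝ × α => duhamelMajorant ν (a p.2) (u p.2) (b p.2) p.1 := by
  refine Measurable.add (by fun_prop) (measurable_setLIntegral_Icc ?_ measurable_fst)
  exact (by fun_prop : Measurable fun q : (ℝ × α) × ℝ =>
      ENNReal.ofReal (exp (-ν * (q.1.1 - q.2) * a q.1.2 ^ 2))).mul
    (hb.comp (measurable_fst.snd.prodMk measurable_snd))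

end DuhamelMajorant

lemma lintegral_mul_add_setLIntegral {α : Type*} [MeasurableSpace α] {μ : Measure α}
    [SFinite μ] {w : α → ℝ≥0∞} (hw : Measurable w) {g : ℝ → α → ℝ≥0∞}
    (hg : Measurable (uncurry g)) (u : α → ℝ≥0∞) (I : Set ℝ) :
    ∫⁻ ξ, w ξ * (u ξ + ∫⁻ s in I, g s ξ) ∂μ =
      ∫⁻ ξ, w ξ * u ξ ∂μ + ∫⁻ s in I, ∫⁻ ξ, w ξ * g s ξ ∂μ := by
  simp_rw [mul_add]
  rw [lintegral_add_right (g := fun ξ => w ξ * ∫⁻ s in I, g s ξ) _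
    (hw.mul hg.lintegral_prod_left'), ← lintegral_lintegral_swap
    ((hw.comp measurable_fst).mul (hg.comp measurable_swap)).aemeasurable]
  exact congrArg _ (lintegral_congr fun ξ =>
    (lintegral_const_mul _ (hg.comp measurable_prodMk_right)).symm)

lemma enorm_le_duhamelMajorant {E F : Type*} [NormedAddCommGroup E] [NormedAddCommGroup F]
    [NormedSpace ℝ F] {ν : ℝ} {V₀ : E → F} {f V : ℝ → E → F}
    (hV : ∀ t ξ, V t ξ = exp (-ν * t * ‖ξ‖ ^ 2) • V₀ ξ +
      ∫ s in Icc (0 : ℝ) t, exp (-ν * (t - s) * ‖ξ‖ ^ 2) • f s ξ) (t : ℝ) (ξ : E) :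
    ‖V t ξ‖ₑ ≤ duhamelMajorant ν ‖ξ‖ ‖V₀ ξ‖ₑ (‖f · ξ‖ₑ) t := by
  rw [hV]
  refine (enorm_add_le _ _).trans
    (add_le_add ?_ ((enorm_integral_le_lintegral_enorm _).trans_eq ?_))
  · rw [enorm_smul, Real.enorm_eq_ofReal (exp_nonneg _)]
  · simp_rw [enorm_smul, Real.enorm_eq_ofReal (exp_nonneg _)]

section HeatDuhamel

variable {E F : Type*} [NormedAddCommGroup E] [MeasurableSpace E]
  {μ : Measure E} [SFinite μ] [NormedAddCommGroup F] [NormedSpace ℝ F] [MeasurableSpace F]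
  [OpensMeasurableSpace F] {ν : ℝ} {V₀ : E → F} {f V : ℝ → E → F}

theorem lintegral_mul_enorm_duhamel_le {w : E → ℝ≥0∞} (hw : Measurable w) (hν : 0 ≤ ν)
    (hf : Measurable (uncurry f))
    (hV : ∀ t ξ, V t ξ = exp (-ν * t * ‖ξ‖ ^ 2) • V₀ ξ +
      ∫ s in Icc (0 : ℝ) t, exp (-ν * (t - s) * ‖ξ‖ ^ 2) • f s ξ)
    {t t₀ : ℝ} (ht : t ∈ Icc 0 t₀) :
    ∫⁻ ξ, w ξ * ‖V t ξ‖ₑ ∂μ ≤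
      ∫⁻ ξ, w ξ * ‖V₀ ξ‖ₑ ∂μ + ∫⁻ s in Icc 0 t₀, ∫⁻ ξ, w ξ * ‖f s ξ‖ₑ ∂μ :=
  calc ∫⁻ ξ, w ξ * ‖V t ξ‖ₑ ∂μ
      ≤ ∫⁻ ξ, w ξ * (‖V₀ ξ‖ₑ + ∫⁻ s in Icc 0 t₀, ‖f s ξ‖ₑ) ∂μ := by
        gcongr with ξ
        exact (enorm_le_duhamelMajorant hV t ξ).trans
          (duhamelMajorant_le_add_setLIntegral hν ht)
    _ = _ := lintegral_mul_add_setLIntegral (g := fun s ξ => ‖f s ξ‖ₑ) hw hf.enorm _ _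

theorem ofReal_mul_setLIntegral_lintegral_norm_mul_enorm_duhamel_le
    [OpensMeasurableSpace E] (hν : 0 < ν) (hV₀ : Measurable V₀) (hf : Measurable (uncurry f))
    (hV : ∀ t ξ, V t ξ = exp (-ν * t * ‖ξ‖ ^ 2) • V₀ ξ +
      ∫ s in Icc (0 : ℝ) t, exp (-ν * (t - s) * ‖ξ‖ ^ 2) • f s ξ) (t₀ : ℝ) :
    ENNReal.ofReal ν * ∫⁻ t in Icc 0 t₀, ∫⁻ ξ, ENNReal.ofReal ‖ξ‖ * ‖V t ξ‖ₑ ∂μ ≤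
      ∫⁻ ξ, (ENNReal.ofReal ‖ξ‖)⁻¹ * ‖V₀ ξ‖ₑ ∂μ +
        ∫⁻ s in Icc 0 t₀, ∫⁻ ξ, (ENNReal.ofReal ‖ξ‖)⁻¹ * ‖f s ξ‖ₑ ∂μ := by
  have hnorm : Measurable fun ξ : E => ENNReal.ofReal ‖ξ‖ := measurable_norm.ennreal_ofReal
  have hD : Measurable fun p : ℝ × E =>
      ENNReal.ofReal ‖p.2‖ * duhamelMajorant ν ‖p.2‖ ‖V₀ p.2‖ₑ (‖f · p.2‖ₑ) p.1 :=
    (hnorm.comp measurable_snd).mul (measurable_duhamelMajorant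
      (b := fun ξ s => ‖f s ξ‖ₑ) measurable_norm hV₀.enorm (hf.enorm.comp measurable_swap))
  calc ENNReal.ofReal ν * ∫⁻ t in Icc 0 t₀, ∫⁻ ξ, ENNReal.ofReal ‖ξ‖ * ‖V t ξ‖ₑ ∂μ
      ≤ ENNReal.ofReal ν * ∫⁻ t in Icc 0 t₀, ∫⁻ ξ,
          ENNReal.ofReal ‖ξ‖ * duhamelMajorant ν ‖ξ‖ ‖V₀ ξ‖ₑ (‖f · ξ‖ₑ) t ∂μ := by
        gcongr with t ξ
        exact enorm_le_duhamelMajorant hV t ξ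
    _ = ∫⁻ ξ, (ENNReal.ofReal ν * ∫⁻ t in Icc 0 t₀,
          ENNReal.ofReal ‖ξ‖ * duhamelMajorant ν ‖ξ‖ ‖V₀ ξ‖ₑ (‖f · ξ‖ₑ) t) ∂μ := by
        rw [lintegral_lintegral_swap hD.aemeasurable,
          lintegral_const_mul' _ _ ENNReal.ofReal_ne_top]
    _ ≤ ∫⁻ ξ, (ENNReal.ofReal ‖ξ‖)⁻¹ * (‖V₀ ξ‖ₑ + ∫⁻ s in Icc 0 t₀, ‖f s ξ‖ₑ) ∂μ :=
        lintegral_mono fun ξ => ofReal_mul_setLIntegral_ofReal_mul_duhamelMajorant_le hν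
          (hf.enorm.comp measurable_prodMk_right) t₀
    _ = _ :=
        lintegral_mul_add_setLIntegral (g := fun s ξ => ‖f s ξ‖ₑ) hnorm.inv hf.enorm _ _

end HeatDuhamel

theorem stmt_9_general (ν T : ℝ) (hν : 0 < ν)
    (V₀ : EuclideanSpace ℝ (Fin 3) → ℂ) (f : ℝ → EuclideanSpace ℝ (Fin 3) → ℂ)
    (hV₀ : Measurable V₀) (hf : Measurable (Function.uncurry f))
    (V : ℝ → EuclideanSpace ℝ (Fin 3) → ℂ)
    (hV : ∀ t ξ, V t ξ = Real.exp (-ν * t * ‖ξ‖ ^ 2) • V₀ ξ +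
        ∫ s in Set.Icc (0 : ℝ) t, Real.exp (-ν * (t - s) * ‖ξ‖ ^ 2) • f s ξ) :
    ∀ t₀ ∈ Set.Icc (0 : ℝ) T,
      (⨆ t ∈ Set.Icc (0 : ℝ) t₀, ∫⁻ ξ, (ENNReal.ofReal ‖ξ‖)⁻¹ * ‖V t ξ‖₊) +
          ENNReal.ofReal ν *
            ∫⁻ t in Set.Icc (0 : ℝ) t₀, ∫⁻ ξ, ENNReal.ofReal ‖ξ‖ * ‖V t ξ‖₊ ≤
        2 * ((∫⁻ ξ, (ENNReal.ofReal ‖ξ‖)⁻¹ * ‖V₀ ξ‖₊) +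
          ∫⁻ s in Set.Icc (0 : ℝ) t₀, ∫⁻ ξ, (ENNReal.ofReal ‖ξ‖)⁻¹ * ‖f s ξ‖₊) := by
  intro t₀ _
  rw [two_mul]
  exact add_le_add
    (iSup₂_le fun t ht =>
      lintegral_mul_enorm_duhamel_le measurable_norm.ennreal_ofReal.inv hν.le hf hV ht)
    (ofReal_mul_setLIntegral_lintegral_norm_mul_enorm_duhamel_le hν hV₀ hf hV t₀)

/-- Lemma 3.1, estimate (3.7): for
`V(t,ξ) = e^{−νt|ξ|²} V₀(ξ) + ∫₀ᵗ e^{−ν(t−s)|ξ|²} f(s,ξ) ds` (Duhamel's formula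
in Fourier variables) with `V₀ ∈ χ^{−1}` and `f ∈ L¹([0,T];χ^{−1})`, for every
`t₀ ∈ [0,T]`:
`‖V‖_{L^∞([0,t₀];χ^{−1})} + ν‖V‖_{L¹([0,t₀];χ¹)}
    ≤ 2(‖V₀‖_{χ^{−1}} + ‖f‖_{L¹([0,t₀];χ^{−1})})`. -/
theorem stmt_9 (ν T : ℝ) (hν : 0 < ν) (hT : 0 < T)
    (V₀ : EuclideanSpace ℝ (Fin 3) → ℂ) (f : ℝ → EuclideanSpace ℝ (Fin 3) → ℂ)
    (hV₀ : Measurable V₀) (hf : Measurable (Function.uncurry f))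
    (hV₀int : (∫⁻ ξ, (ENNReal.ofReal ‖ξ‖)⁻¹ * ‖V₀ ξ‖₊) ≠ ⊤)
    (hfint : (∫⁻ s in Set.Icc (0 : ℝ) T, ∫⁻ ξ, (ENNReal.ofReal ‖ξ‖)⁻¹ * ‖f s ξ‖₊) ≠ ⊤)
    (V : ℝ → EuclideanSpace ℝ (Fin 3) → ℂ)
    (hV : ∀ t ξ, V t ξ = Real.exp (-ν * t * ‖ξ‖ ^ 2) • V₀ ξ +
        ∫ s in Set.Icc (0 : ℝ) t, Real.exp (-ν * (t - s) * ‖ξ‖ ^ 2) • f s ξ) :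
    ∀ t₀ ∈ Set.Icc (0 : ℝ) T,
      (⨆ t ∈ Set.Icc (0 : ℝ) t₀, ∫⁻ ξ, (ENNReal.ofReal ‖ξ‖)⁻¹ * ‖V t ξ‖₊) +
          ENNReal.ofReal ν *
            ∫⁻ t in Set.Icc (0 : ℝ) t₀, ∫⁻ ξ, ENNReal.ofReal ‖ξ‖ * ‖V t ξ‖₊ ≤
        2 * ((∫⁻ ξ, (ENNReal.ofReal ‖ξ‖)⁻¹ * ‖V₀ ξ‖₊) +
          ∫⁻ s in Set.Icc (0 : ℝ) t₀, ∫⁻ ξ, (ENNReal.ofReal ‖ξ‖)⁻¹ * ‖f s ξ‖₊) :=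
  stmt_9_general ν T hν V₀ f hV₀ hf V hV
end

section
/- Define h : [0,∞) → [0,∞) by h(r) = 2^{(j+1)/2} for r ∈ [1 − 2^{−j}, 1 − 2^{−(j+1)}) for each integer j ≥ 0, and h(r) = 0 for r ≥ 1, and define g : ℝ³ → [0,∞) by g(ξ) = h(|ξ|)/|ξ| for ξ ≠ 0. Then ∫_{ℝ³} |ξ| g(ξ)² dξ = ∞. -/
/-!
On the dyadic shell `1 - 2⁻ᵏ ≤ ‖ξ‖ < 1 - 2⁻⁽ᵏ⁺¹⁾` the integrand `‖ξ‖ g(ξ)² = h(‖ξ‖)² / ‖ξ‖` is at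
least `h² = 2ᵏ⁺¹`, while the shell has volume at least `2⁻⁽ᵏ⁺¹⁾ / 4` times that of the unit
ball (its width is `2⁻⁽ᵏ⁺¹⁾` and its outer radius is at least `1/2`). So each of the infinitely
many disjoint shells contributes at least a quarter of the volume of the unit ball.
-/

open MeasureTheory Metric Set ENNReal Module Function

lemma lintegral_eq_top_of_le_setLIntegral {α ι : Type*} [MeasurableSpace α] [Countable ι]
    [Infinite ι] {μ : Measure α} {f : α → ℝ≥0∞} {s : ι → Set α}
    (hs : ∀ i, MeasurableSet (s i)) (hd : Pairwise (Disjoint on s)) {c : ℝ≥0∞} (hc : c ≠ 0)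
    (hle : ∀ i, c ≤ ∫⁻ x in s i, f x ∂μ) :
    ∫⁻ x, f x ∂μ = ∞ := by
  refine eq_top_iff.mpr ?_
  calc ∞ = ∑' _ : ι, c := (ENNReal.tsum_const_eq_top_of_ne_zero hc).symm
    _ ≤ ∑' i, ∫⁻ x in s i, f x ∂μ := ENNReal.tsum_le_tsum hle
    _ = ∫⁻ x in ⋃ i, s i, f x ∂μ := (lintegral_iUnion hs hd f).symm
    _ ≤ ∫⁻ x, f x ∂μ := setLIntegral_le_lintegral _ _

lemma sub_mul_pow_pred_le_pow_sub_pow {r R : ℝ} (hr : 0 ≤ r) (hrR : r ≤ R) {n : ℕ} (hn : n ≠ 0) :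
    (R - r) * R ^ (n - 1) ≤ R ^ n - r ^ n := by
  obtain ⟨m, rfl⟩ := Nat.exists_eq_succ_of_ne_zero hn
  have : r ^ m ≤ R ^ m := pow_le_pow_left₀ hr hrR m
  simp only [Nat.succ_sub_one, pow_succ]
  nlinarith

section Annulus

variable {E : Type*} [NormedAddCommGroup E] [NormedSpace ℝ E] [MeasurableSpace E] [BorelSpace E]
  [FiniteDimensional ℝ E] [Nontrivial E] (μ : Measure E) [μ.IsAddHaarMeasure]

lemma Measure.addHaar_ball_diff_ball (x : E) {r R : ℝ} (hr : 0 ≤ r) (hrR : r ≤ R) :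
    μ (ball x R \ ball x r) =
      ENNReal.ofReal (R ^ finrank ℝ E - r ^ finrank ℝ E) * μ (ball 0 1) := by
  rw [measure_sdiff (ball_subset_ball hrR) measurableSet_ball.nullMeasurableSet
    measure_ball_lt_top.ne, Measure.addHaar_ball μ x hr, Measure.addHaar_ball μ x (hr.trans hrR),
    ← ENNReal.sub_mul fun _ _ => measure_ball_lt_top.ne,
    ← ENNReal.ofReal_sub _ (by positivity)]

end Annulus

noncomputable def dyadicRadius (k : ℕ) : ℝ := 1 - (2 ^ k)⁻¹

lemma dyadicRadius_nonneg (k : ℕ) : 0 ≤ dyadicRadius k := by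
  have : ((2 : ℝ) ^ k)⁻¹ ≤ 1 := inv_le_one_of_one_le₀ (one_le_pow₀ one_le_two)
  simp only [dyadicRadius]; linarith

lemma dyadicRadius_lt_one (k : ℕ) : dyadicRadius k < 1 := by
  simp only [dyadicRadius]; linarith [show (0 : ℝ) < (2 ^ k)⁻¹ by positivity]

lemma dyadicRadius_succ_sub (k : ℕ) : dyadicRadius (k + 1) - dyadicRadius k = (2 ^ (k + 1))⁻¹ := by
  simp only [dyadicRadius, pow_succ]; field_simp; ring

lemma dyadicRadius_le_succ (k : ℕ) : dyadicRadius k ≤ dyadicRadius (k + 1) := by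
  linarith [dyadicRadius_succ_sub k, show (0 : ℝ) < (2 ^ (k + 1))⁻¹ by positivity]

lemma dyadicRadius_monotone : Monotone dyadicRadius :=
  monotone_nat_of_le_succ dyadicRadius_le_succ

lemma half_le_dyadicRadius_succ (k : ℕ) : 1 / 2 ≤ dyadicRadius (k + 1) := by
  have : ((2 : ℝ) ^ (k + 1))⁻¹ ≤ 2⁻¹ := inv_anti₀ two_pos (le_self_pow₀ one_le_two (by omega))
  simp only [dyadicRadius]; linarith

def dyadicShell (E : Type*) [NormedAddCommGroup E] (k : ℕ) : Set E :=
  ball 0 (dyadicRadius (k + 1)) \ ball 0 (dyadicRadius k)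

section Shell

variable {E : Type*} [NormedAddCommGroup E]

lemma dyadicShell_eq_preimage (k : ℕ) :
    dyadicShell E k = (‖·‖ : E → ℝ) ⁻¹' Ico (dyadicRadius k) (dyadicRadius (k + 1)) := by
  ext x; simp [dyadicShell, and_comm]

lemma measurableSet_dyadicShell [MeasurableSpace E] [OpensMeasurableSpace E] (k : ℕ) :
    MeasurableSet (dyadicShell E k) :=
  measurableSet_ball.diff measurableSet_ball

lemma pairwise_disjoint_dyadicShell : Pairwise (Disjoint on dyadicShell E) := by
  intro i j hij
  simpa only [onFun, dyadicShell_eq_preimage, Order.succ_eq_add_one] using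
    (dyadicRadius_monotone.pairwise_disjoint_on_Ico_succ hij).preimage (‖·‖ : E → ℝ)

variable [NormedSpace ℝ E] [MeasurableSpace E] [BorelSpace E] [FiniteDimensional ℝ E]
  [Nontrivial E] (μ : Measure E) [μ.IsAddHaarMeasure]

lemma le_addHaar_dyadicShell (k : ℕ) :
    ENNReal.ofReal ((2 ^ (k + 1))⁻¹ * (2 ^ (finrank ℝ E - 1))⁻¹) * μ (ball 0 1) ≤
      μ (dyadicShell E k) := by
  rw [dyadicShell, Measure.addHaar_ball_diff_ball μ 0 (dyadicRadius_nonneg k)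
    (dyadicRadius_le_succ k)]
  gcongr
  calc (2 ^ (k + 1))⁻¹ * (2 ^ (finrank ℝ E - 1))⁻¹
      = (dyadicRadius (k + 1) - dyadicRadius k) * (1 / 2) ^ (finrank ℝ E - 1) := by
        rw [dyadicRadius_succ_sub, one_div, inv_pow]
    _ ≤ (dyadicRadius (k + 1) - dyadicRadius k) * dyadicRadius (k + 1) ^ (finrank ℝ E - 1) := by
        gcongr
        · linarith [dyadicRadius_le_succ k]
        · exact half_le_dyadicRadius_succ k
    _ ≤ _ := sub_mul_pow_pred_le_pow_sub_pow (dyadicRadius_nonneg k) (dyadicRadius_le_succ k)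
          finrank_pos.ne'

end Shell

lemma eq_sqrt_of_mem_Ico_dyadicRadius {h : ℝ → ℝ}
    (hh : ∀ j : ℕ, ∀ r : ℝ,
      1 - (2 : ℝ) ^ (-(j : ℝ)) ≤ r → r < 1 - (2 : ℝ) ^ (-((j : ℝ) + 1)) →
        h r = (2 : ℝ) ^ (((j : ℝ) + 1) / 2))
    {k : ℕ} {r : ℝ} (hr : r ∈ Ico (dyadicRadius k) (dyadicRadius (k + 1))) :
    h r = √(2 ^ (k + 1)) := by
  have hk : ((k : ℝ) + 1) = ((k + 1 : ℕ) : ℝ) := by push_cast; ring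
  rw [hh k r, Real.sqrt_eq_rpow, ← Real.rpow_natCast, ← Real.rpow_mul zero_le_two, ← hk,
    div_eq_mul_one_div]
  · rw [Real.rpow_neg_natCast, zpow_neg, zpow_natCast]; exact hr.1
  · rw [hk, Real.rpow_neg_natCast, zpow_neg, zpow_natCast]; exact hr.2

lemma ofReal_two_pow_le_of_mem_dyadicShell {E : Type*} [NormedAddCommGroup E] {h : ℝ → ℝ}
    (hh : ∀ k r, r ∈ Ico (dyadicRadius k) (dyadicRadius (k + 1)) → h r = √(2 ^ (k + 1)))
    {g : E → ℝ} (hg : ∀ ξ : E, ξ ≠ 0 → g ξ = h ‖ξ‖ / ‖ξ‖) {k : ℕ} {ξ : E}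
    (hξ : ξ ∈ dyadicShell E k) (hξ0 : ξ ≠ 0) :
    ENNReal.ofReal (2 ^ (k + 1)) ≤ ENNReal.ofReal ‖ξ‖ * ENNReal.ofReal (g ξ) ^ 2 := by
  rw [dyadicShell_eq_preimage, mem_preimage] at hξ
  have hpos : 0 < ‖ξ‖ := norm_pos_iff.mpr hξ0
  have hle : ‖ξ‖ ≤ 1 := hξ.2.le.trans (dyadicRadius_lt_one _).le
  have hgξ : g ξ = √(2 ^ (k + 1)) / ‖ξ‖ := by rw [hg ξ hξ0, hh k _ hξ]
  rw [← ENNReal.ofReal_pow (by rw [hgξ]; positivity), ← ENNReal.ofReal_mul (norm_nonneg _)]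
  refine ENNReal.ofReal_le_ofReal ?_
  calc (2 : ℝ) ^ (k + 1) ≤ 2 ^ (k + 1) / ‖ξ‖ := le_div_self (by positivity) hpos hle
    _ = ‖ξ‖ * g ξ ^ 2 := by
      rw [hgξ, div_pow, Real.sq_sqrt (by positivity)]; field_simp

theorem stmt_12_general (h : ℝ → ℝ)
    (hh : ∀ j : ℕ, ∀ r : ℝ,
      1 - (2 : ℝ) ^ (-(j : ℝ)) ≤ r → r < 1 - (2 : ℝ) ^ (-((j : ℝ) + 1)) →
        h r = (2 : ℝ) ^ (((j : ℝ) + 1) / 2))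
    (g : EuclideanSpace ℝ (Fin 3) → ℝ)
    (hg : ∀ ξ : EuclideanSpace ℝ (Fin 3), ξ ≠ 0 → g ξ = h ‖ξ‖ / ‖ξ‖) :
    (∫⁻ ξ, ENNReal.ofReal ‖ξ‖ * ENNReal.ofReal (g ξ) ^ 2) = ⊤ := by
  set B := volume (ball (0 : EuclideanSpace ℝ (Fin 3)) 1)
  have hdim : finrank ℝ (EuclideanSpace ℝ (Fin 3)) - 1 = 2 := by simp
  refine lintegral_eq_top_of_le_setLIntegral measurableSet_dyadicShell
    pairwise_disjoint_dyadicShell (c := ENNReal.ofReal (1 / 4) * B)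
    (mul_ne_zero (by norm_num) (measure_ball_pos volume 0 one_pos).ne') fun k => ?_
  calc ENNReal.ofReal (1 / 4) * B
      = ENNReal.ofReal (2 ^ (k + 1)) *
          (ENNReal.ofReal ((2 ^ (k + 1))⁻¹ * (2 ^ 2)⁻¹) * B) := by
        rw [← mul_assoc, ← ENNReal.ofReal_mul (by positivity)]
        congr 2
        field_simp
        norm_num
    _ ≤ ENNReal.ofReal (2 ^ (k + 1)) * volume (dyadicShell (EuclideanSpace ℝ (Fin 3)) k) := by
        gcongr
        simpa only [hdim] using
          le_addHaar_dyadicShell (volume : Measure (EuclideanSpace ℝ (Fin 3))) k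
    _ = ∫⁻ _ in dyadicShell (EuclideanSpace ℝ (Fin 3)) k, ENNReal.ofReal (2 ^ (k + 1)) :=
        (setLIntegral_const _ _).symm
    _ ≤ _ := setLIntegral_mono_ae' (measurableSet_dyadicShell k) <|
        (volume.ae_ne 0).mono fun ξ hξ0 hξ =>
          ofReal_two_pow_le_of_mem_dyadicShell
            (fun _ _ => eq_sqrt_of_mem_Ico_dyadicRadius hh) hg hξ hξ0

/-- The explicit example `f = 𝓕^{−1}(h(|ξ|)/|ξ|)` does not belong to
`Ḣ^{1/2}(ℝ³)`: with `h(r) = 2^{(j+1)/2}` on `[1 − 2^{−j}, 1 − 2^{−(j+1)})` for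
each `j ≥ 0` and `h(r) = 0` for `r ≥ 1`, and `g(ξ) = h(|ξ|)/|ξ|`, one has
`∫ |ξ| g(ξ)² dξ = ∞`. -/
theorem stmt_12 (h : ℝ → ℝ)
    (hh : ∀ j : ℕ, ∀ r : ℝ,
      1 - (2 : ℝ) ^ (-(j : ℝ)) ≤ r → r < 1 - (2 : ℝ) ^ (-((j : ℝ) + 1)) →
        h r = (2 : ℝ) ^ (((j : ℝ) + 1) / 2))
    (hh1 : ∀ r : ℝ, 1 ≤ r → h r = 0)
    (g : EuclideanSpace ℝ (Fin 3) → ℝ)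
    (hg : ∀ ξ : EuclideanSpace ℝ (Fin 3), ξ ≠ 0 → g ξ = h ‖ξ‖ / ‖ξ‖) :
    (∫⁻ ξ, ENNReal.ofReal ‖ξ‖ * ENNReal.ofReal (g ξ) ^ 2) = ⊤ :=
  stmt_12_general h hh g hg
end

section
/- Let ν > 0 and T* ∈ (0,∞]. Let X : [0,T*) → [0,∞) be continuous and Y : [0,T*) → [0,∞) be monotone nondecreasing with Y(0) = 0, and suppose that for every t ∈ [0,T*): X(t) + ν Y(t) ≤ X(0) + ( sup_{0 ≤ s ≤ t} X(s) ) · Y(t). If X(0) < ν, then for every t ∈ [0,T*): X(t) ≤ X(0) and X(t) + (ν − X(0)) Y(t) ≤ X(0). -/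
/-!
Put the barrier `c = (X 0 + ν) / 2` strictly between `X 0` and `ν`. As long as `X ≤ c` on `[0, s]`,
the hypothesis gives `X s + (ν - c) Y s ≤ X 0`, hence `X s ≤ X 0 < c`; so at the first time the
continuous `X` reached `c` it would already be back below `X 0`, and it never reaches `c`. Then
`sup_{[0,t]} X ≤ X 0`, and the hypothesis becomes `X t + (ν - X 0) Y t ≤ X 0`.
-/

open Set

section FirstHitting

variable {α δ : Type*} [ConditionallyCompleteLinearOrder α] [TopologicalSpace α] [OrderTopology α]
  [DenselyOrdered α] [LinearOrder δ] [TopologicalSpace δ] [OrderClosedTopology δ]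
  {f : α → δ} {a b : α} {c c' : δ}

theorem ContinuousOn.exists_first_eq_Icc (hf : ContinuousOn f (Icc a b)) (ha : f a < c)
    (hreach : ∃ s ∈ Icc a b, c ≤ f s) :
    ∃ m ∈ Icc a b, f m = c ∧ ∀ r ∈ Ico a m, f r < c := by
  set K := Icc a b ∩ f ⁻¹' Ici c
  have hK : IsClosed K := hf.preimage_isClosed_of_isClosed isClosed_Icc isClosed_Ici
  have hKbdd : BddBelow K := ⟨a, fun x hx => hx.1.1⟩
  obtain ⟨hmK, hmf⟩ : sInf K ∈ K := hK.csInf_mem hreach hKbdd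
  set m := sInf K
  have hbefore : ∀ r ∈ Ico a m, f r < c := fun r hr => not_le.1 fun hcr =>
    (csInf_le hKbdd ⟨⟨hr.1, hr.2.le.trans hmK.2⟩, hcr⟩).not_gt hr.2
  obtain ⟨y, hy, hyc⟩ := intermediate_value_Icc hmK.1 (hf.mono (Icc_subset_Icc_right hmK.2))
    ⟨ha.le, hmf⟩
  have hym : y = m := hy.2.eq_or_lt.resolve_right fun hlt => (hbefore y ⟨hy.1, hlt⟩).ne hyc
  exact ⟨m, hmK, hym ▸ hyc, hbefore⟩

theorem ContinuousOn.le_of_bootstrap_Icc (hf : ContinuousOn f (Icc a b)) (hc : c' < c)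
    (ha : f a < c) (hboot : ∀ s ∈ Icc a b, (∀ r ∈ Icc a s, f r ≤ c) → f s ≤ c') :
    ∀ s ∈ Icc a b, f s ≤ c' := by
  have hbelow : ∀ s ∈ Icc a b, f s < c := by
    by_contra! hreach
    obtain ⟨m, hm, hmc, hbefore⟩ := hf.exists_first_eq_Icc ha hreach
    have hupto : ∀ r ∈ Icc a m, f r ≤ c := fun r hr =>
      hr.2.eq_or_lt.elim (fun h => (h ▸ hmc).le) fun h => (hbefore r ⟨hr.1, h⟩).le
    exact (hmc ▸ hboot m hm hupto).not_gt hc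
  exact fun s hs => hboot s hs fun r hr => (hbelow r ⟨hr.1, hr.2.trans hs.2⟩).le

end FirstHitting

theorem stmt_13_general (ν : ℝ) (Tstar : ENNReal)
    (X Y : ℝ → ℝ)
    (hXcont : ContinuousOn X {t : ℝ | 0 ≤ t ∧ ENNReal.ofReal t < Tstar})
    (hYnn : ∀ t : ℝ, 0 ≤ t → ENNReal.ofReal t < Tstar → 0 ≤ Y t)
    (hineq : ∀ t : ℝ, 0 ≤ t → ENNReal.ofReal t < Tstar →
      X t + ν * Y t ≤ X 0 + sSup (X '' Set.Icc 0 t) * Y t)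
    (h0 : X 0 < ν) :
    ∀ t : ℝ, 0 ≤ t → ENNReal.ofReal t < Tstar →
      X t ≤ X 0 ∧ X t + (ν - X 0) * Y t ≤ X 0 := by
  intro t ht htT
  have hIcc : Icc 0 t ⊆ {t : ℝ | 0 ≤ t ∧ ENNReal.ofReal t < Tstar} := fun s hs =>
    ⟨hs.1, (ENNReal.ofReal_le_ofReal hs.2).trans_lt htT⟩
  have hYs : ∀ s ∈ Icc 0 t, 0 ≤ Y s := fun s hs => hYnn s hs.1 (hIcc hs).2
  have henergy : ∀ s ∈ Icc 0 t, ∀ M, (∀ r ∈ Icc 0 s, X r ≤ M) → X s + (ν - M) * Y s ≤ X 0 := by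
    intro s hs M hM
    have hsup : sSup (X '' Icc 0 s) ≤ M := csSup_le ((nonempty_Icc.2 hs.1).image X) (by
      rintro _ ⟨r, hr, rfl⟩
      exact hM r hr)
    nlinarith [hineq s hs.1 (hIcc hs).2, mul_le_mul_of_nonneg_right hsup (hYs s hs)]
  have hbound : ∀ s ∈ Icc 0 t, X s ≤ X 0 :=
    (hXcont.mono hIcc).le_of_bootstrap_Icc (c := (X 0 + ν) / 2) (by linarith) (by linarith)
      fun s hs hX => by nlinarith [henergy s hs _ hX, hYs s hs]
  have hfinal := henergy t ⟨ht, le_rfl⟩ (X 0) hbound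
  exact ⟨by nlinarith [hYs t ⟨ht, le_rfl⟩], hfinal⟩

/-- The continuity (bootstrap) argument: if `X` is continuous and nonnegative on
`[0,T*)` (with `T* ∈ (0,∞]`, encoded as `Tstar : ℝ≥0∞`), `Y` is nonnegative,
nondecreasing with `Y(0) = 0`, and
`X(t) + ν Y(t) ≤ X(0) + (sup_{0≤s≤t} X(s)) Y(t)` for all `t ∈ [0,T*)`, then
`X(0) < ν` implies `X(t) ≤ X(0)` and `X(t) + (ν − X(0)) Y(t) ≤ X(0)` for all
`t ∈ [0,T*)`. -/
theorem stmt_13 (ν : ℝ) (hν : 0 < ν) (Tstar : ENNReal) (hTstar : 0 < Tstar)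
    (X Y : ℝ → ℝ)
    (hXcont : ContinuousOn X {t : ℝ | 0 ≤ t ∧ ENNReal.ofReal t < Tstar})
    (hXnn : ∀ t : ℝ, 0 ≤ t → ENNReal.ofReal t < Tstar → 0 ≤ X t)
    (hYnn : ∀ t : ℝ, 0 ≤ t → ENNReal.ofReal t < Tstar → 0 ≤ Y t)
    (hYmono : ∀ s t : ℝ, 0 ≤ s → s ≤ t → ENNReal.ofReal t < Tstar → Y s ≤ Y t)
    (hY0 : Y 0 = 0)
    (hineq : ∀ t : ℝ, 0 ≤ t → ENNReal.ofReal t < Tstar →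
      X t + ν * Y t ≤ X 0 + sSup (X '' Set.Icc 0 t) * Y t)
    (h0 : X 0 < ν) :
    ∀ t : ℝ, 0 ≤ t → ENNReal.ofReal t < Tstar →
      X t ≤ X 0 ∧ X t + (ν - X 0) * Y t ≤ X 0 :=
  stmt_13_general ν Tstar X Y hXcont hYnn hineq h0
end

section
/- Let ν > 0 and T* ∈ (0,∞]. Let u : [0,T*) × ℝ³ → [0,∞) be measurable such that X(t) = ∫_{ℝ³} |ξ|⁻¹ u(t,ξ) dξ is continuous in t, Y(t) = ∫₀ᵗ ∫_{ℝ³} |ξ| u(s,ξ) dξ ds is finite for every t < T*, and for every t ∈ [0,T*): X(t) + ν Y(t) ≤ X(0) + ∫₀ᵗ ( ∫_{ℝ³} u(s,ξ) dξ )² ds, together with ∫₀ᵗ ( ∫_{ℝ³} u(s,ξ) dξ )² ds ≤ ( sup_{0≤s≤t} X(s) ) Y(t). If X(0) < ν, then ∫₀^{T*} ( ∫_{ℝ³} u(t,ξ) dξ )² dt ≤ X(0)² / (ν − X(0)). -/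
/-!
Since `X` is continuous and `X 0 < ν`, a continuity argument shows `X t ≤ X 0` on the whole
interval: as long as `sup_{[0,t]} X ≤ ν`, the two inequalities give
`X t + ν Y t ≤ X 0 + ν Y t`, i.e. `X t ≤ X 0`, so `X` can never reach `ν`. Once
`sup X ≤ X 0`, they give `(ν - X 0) Y t ≤ X 0`, hence
`∫₀ᵗ ‖u‖²_{χ⁰} ≤ X 0 * Y t ≤ X 0² / (ν - X 0)` uniformly in `t`.
-/

open MeasureTheory Set

theorem le_of_continuousOn_of_forall_lt_imp_le {α β : Type*}
    [ConditionallyCompleteLinearOrder α] [TopologicalSpace α] [OrderTopology α] [DenselyOrdered α]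
    [LinearOrder β] [TopologicalSpace β] [OrderClosedTopology β] [DenselyOrdered β]
    {f : α → β} {a b : α} {A c : β}
    (hf : ContinuousOn f (Icc a b)) (hAc : A < c) (ha : f a ≤ A)
    (hstep : ∀ r ∈ Icc a b, (∀ q ∈ Icc a r, f q < c) → f r ≤ A) :
    ∀ r ∈ Icc a b, f r ≤ A := by
  suffices hlt : ∀ r ∈ Icc a b, f r < c from
    fun r hr => hstep r hr fun q hq => hlt q ⟨hq.1, hq.2.trans hr.2⟩
  by_contra! ⟨r, hr, hcr⟩
  -- `τ` is the first time `f` reaches `c`; before `τ` the step hypothesis applies.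
  set E := Icc a b ∩ f ⁻¹' Ici c
  have hEbdd : BddBelow E := ⟨a, fun x hx => hx.1.1⟩
  set τ := sInf E
  have hτ : τ ∈ E :=
    (hf.preimage_isClosed_of_isClosed isClosed_Icc isClosed_Ici).csInf_mem ⟨r, hr, hcr⟩ hEbdd
  have hbefore : ∀ q ∈ Icc a b, q < τ → f q < c := fun q hq hqτ =>
    not_le.1 fun hcq => (csInf_le hEbdd ⟨hq, hcq⟩).not_gt hqτ
  obtain ⟨d, hAd, hdc⟩ := exists_between hAc
  obtain ⟨q, hq, hfq⟩ := intermediate_value_Icc hτ.1.1 (hf.mono (Icc_subset_Icc_right hτ.1.2))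
    ⟨ha.trans hAd.le, hdc.le.trans hτ.2⟩
  have hqτ : q < τ := by
    refine hq.2.lt_of_ne fun hqτ => hdc.not_ge ?_
    rw [← hfq, hqτ]
    exact hτ.2
  have hqb : q ≤ b := hqτ.le.trans hτ.1.2
  have := hstep q ⟨hq.1, hqb⟩ fun p hp =>
    hbefore p ⟨hp.1, hp.2.trans hqb⟩ (hp.2.trans_lt hqτ)
  exact (hfq ▸ hAd).not_ge this

theorem setLIntegral_le_of_forall_Icc {μ : Measure ℝ} {f : ℝ → ENNReal} {D : Set ℝ}
    {B : ENNReal} (hD₀ : D ⊆ Ici 0) (hD : ∀ t ∈ D, ∃ t' ∈ D, t < t')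
    (hB : ∀ t ∈ D, ∫⁻ x in Icc 0 t, f x ∂μ ≤ B) : ∫⁻ x in D, f x ∂μ ≤ B := by
  let Q := {q : ℚ // ∃ t ∈ D, (q : ℝ) ≤ t}
  have hdir : Directed (· ⊆ ·) fun q : Q => Icc (0 : ℝ) q := fun p q => by
    rcases le_total (p : ℚ) q with h | h
    · exact ⟨q, Icc_subset_Icc_right (by exact_mod_cast h), subset_rfl⟩
    · exact ⟨p, subset_rfl, Icc_subset_Icc_right (by exact_mod_cast h)⟩
  have hcover : D ⊆ ⋃ q : Q, Icc (0 : ℝ) q := fun t ht => by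
    obtain ⟨t', ht', htt'⟩ := hD t ht
    obtain ⟨q, htq, hqt'⟩ := exists_rat_btwn htt'
    exact mem_iUnion.2 ⟨⟨q, t', ht', hqt'.le⟩, hD₀ ht, htq.le⟩
  calc ∫⁻ x in D, f x ∂μ
      ≤ ∫⁻ x in ⋃ q : Q, Icc (0 : ℝ) q, f x ∂μ := lintegral_mono_set hcover
    _ = ⨆ q : Q, ∫⁻ x in Icc (0 : ℝ) q, f x ∂μ := setLIntegral_iUnion_of_directed f hdir
    _ ≤ B := iSup_le fun ⟨q, t, ht, hqt⟩ =>
      (lintegral_mono_set (Icc_subset_Icc_right hqt)).trans (hB t ht)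

theorem ENNReal.le_sq_div_tsub_of_mul_le_add {a ν y z : ENNReal} (ha : a < ν) (hy : y ≠ ⊤)
    (h₁ : ν * y ≤ a + z) (h₂ : z ≤ a * y) : z ≤ a ^ 2 / (ν - a) := by
  have hay : a * y ≠ ⊤ := ENNReal.mul_ne_top ha.ne_top hy
  have hy_le : (ν - a) * y ≤ a := by
    refine (ENNReal.add_le_add_iff_right hay).1 ?_
    rw [← add_mul, tsub_add_cancel_of_le ha.le]
    exact h₁.trans (by gcongr)
  rw [ENNReal.le_div_iff_mul_le (Or.inl (tsub_pos_of_lt ha).ne')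
    (Or.inr (ENNReal.pow_ne_top ha.ne_top))]
  calc z * (ν - a) ≤ a * y * (ν - a) := by gcongr
    _ = a * ((ν - a) * y) := by ring
    _ ≤ a * a := by gcongr
    _ = a ^ 2 := (sq a).symm

theorem stmt_14_general (ν : ℝ)
    (Tstar : ENNReal)
    (u : ℝ → EuclideanSpace ℝ (Fin 3) → ENNReal)
    (X Y Z : ℝ → ENNReal)
    (hZ : ∀ t : ℝ, Z t = ∫⁻ s in Set.Icc (0 : ℝ) t, (∫⁻ ξ, u s ξ) ^ 2)
    (hXcont : ContinuousOn X {t : ℝ | 0 ≤ t ∧ ENNReal.ofReal t < Tstar})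
    (hYfin : ∀ t : ℝ, 0 ≤ t → ENNReal.ofReal t < Tstar → Y t ≠ ⊤)
    (hineq1 : ∀ t : ℝ, 0 ≤ t → ENNReal.ofReal t < Tstar →
      X t + ENNReal.ofReal ν * Y t ≤ X 0 + Z t)
    (hineq2 : ∀ t : ℝ, 0 ≤ t → ENNReal.ofReal t < Tstar →
      Z t ≤ (⨆ s ∈ Set.Icc (0 : ℝ) t, X s) * Y t)
    (h0 : X 0 < ENNReal.ofReal ν) :
    ∫⁻ t in {t : ℝ | 0 ≤ t ∧ ENNReal.ofReal t < Tstar}, (∫⁻ ξ, u t ξ) ^ 2 ≤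
      X 0 ^ 2 / (ENNReal.ofReal ν - X 0) := by
  set D := {t : ℝ | 0 ≤ t ∧ ENNReal.ofReal t < Tstar}
  have hIcc : ∀ t ∈ D, Icc 0 t ⊆ D := fun t ht s hs =>
    ⟨hs.1, (ENNReal.ofReal_le_ofReal hs.2).trans_lt ht.2⟩
  have hX_le : ∀ t ∈ D, ∀ r ∈ Icc 0 t, X r ≤ X 0 := by
    intro t ht
    refine le_of_continuousOn_of_forall_lt_imp_le (hXcont.mono (hIcc t ht)) h0 le_rfl ?_
    intro r hr hlt
    obtain ⟨hr₀, hrT⟩ := hIcc t ht hr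
    have hsup : ⨆ q ∈ Icc 0 r, X q ≤ ENNReal.ofReal ν := iSup₂_le fun q hq => (hlt q hq).le
    have : X r + ENNReal.ofReal ν * Y r ≤ X 0 + ENNReal.ofReal ν * Y r :=
      calc X r + ENNReal.ofReal ν * Y r ≤ X 0 + Z r := hineq1 r hr₀ hrT
        _ ≤ X 0 + ENNReal.ofReal ν * Y r := by grw [hineq2 r hr₀ hrT, hsup]
    exact (ENNReal.add_le_add_iff_right
      (ENNReal.mul_ne_top ENNReal.ofReal_ne_top (hYfin r hr₀ hrT))).1 this
  refine setLIntegral_le_of_forall_Icc (fun t ht => ht.1) (fun t ht => ?_) fun t ht => ?_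
  · obtain ⟨r, hr₀, htr, hrT⟩ := ENNReal.lt_iff_exists_real_btwn.1 ht.2
    exact ⟨r, ⟨hr₀, hrT⟩, (ENNReal.ofReal_lt_ofReal_iff'.1 htr).1⟩
  · rw [← hZ]
    exact ENNReal.le_sq_div_tsub_of_mul_le_add h0 (hYfin t ht.1 ht.2)
      (le_add_self.trans (hineq1 t ht.1 ht.2))
      ((hineq2 t ht.1 ht.2).trans (by grw [iSup₂_le (hX_le t ht)]))

/-- The global a priori bound: if `X(t) = ‖u(t)‖_{χ^{−1}}` is continuous on
`[0,T*)`, `Y(t) = ∫₀ᵗ ‖u(s)‖_{χ¹} ds` is finite on `[0,T*)`, and on `[0,T*)`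
`X(t) + ν Y(t) ≤ X(0) + ∫₀ᵗ ‖u(s)‖²_{χ⁰} ds` together with
`∫₀ᵗ ‖u(s)‖²_{χ⁰} ds ≤ (sup_{0≤s≤t} X(s)) Y(t)`, then `X(0) < ν` implies
`∫₀^{T*} ‖u(t)‖²_{χ⁰} dt ≤ X(0)² / (ν − X(0))`. -/
theorem stmt_14 (ν : ℝ) (hν : 0 < ν) (Tstar : ENNReal) (hTstar : 0 < Tstar)
    (u : ℝ → EuclideanSpace ℝ (Fin 3) → ENNReal)
    (hu : Measurable (Function.uncurry u))
    (X Y Z : ℝ → ENNReal)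
    (hX : ∀ t : ℝ, X t = ∫⁻ ξ, (ENNReal.ofReal ‖ξ‖)⁻¹ * u t ξ)
    (hY : ∀ t : ℝ, Y t = ∫⁻ s in Set.Icc (0 : ℝ) t, ∫⁻ ξ, ENNReal.ofReal ‖ξ‖ * u s ξ)
    (hZ : ∀ t : ℝ, Z t = ∫⁻ s in Set.Icc (0 : ℝ) t, (∫⁻ ξ, u s ξ) ^ 2)
    (hXcont : ContinuousOn X {t : ℝ | 0 ≤ t ∧ ENNReal.ofReal t < Tstar})
    (hYfin : ∀ t : ℝ, 0 ≤ t → ENNReal.ofReal t < Tstar → Y t ≠ ⊤)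
    (hineq1 : ∀ t : ℝ, 0 ≤ t → ENNReal.ofReal t < Tstar →
      X t + ENNReal.ofReal ν * Y t ≤ X 0 + Z t)
    (hineq2 : ∀ t : ℝ, 0 ≤ t → ENNReal.ofReal t < Tstar →
      Z t ≤ (⨆ s ∈ Set.Icc (0 : ℝ) t, X s) * Y t)
    (h0 : X 0 < ENNReal.ofReal ν) :
    ∫⁻ t in {t : ℝ | 0 ≤ t ∧ ENNReal.ofReal t < Tstar}, (∫⁻ ξ, u t ξ) ^ 2 ≤
      X 0 ^ 2 / (ENNReal.ofReal ν - X 0) :=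
  stmt_14_general ν Tstar u X Y Z hZ hXcont hYfin hineq1 hineq2 h0
end
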